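/- arXiv:1210.7148 — 5 statements merged into one kernel-verified Lean document; each statement's English description precedes it below -/
import Mathlib

section
/- Let V be an ertex algebra. Then for all u, v, w ∈ V and all m, n ∈ ℤ, (u_n v)_m w = (−1)^{n+1} · ∑_{j≥0} binom(m,j) · (v_{n+j} u)_{m−j} w, where the sum has only finitely many nonzero terms by truncation. (This is the component form of the identity Y(Y(u,x₀)v,x₂) = Y(Y(v,−x₀)u, x₂+x₀).) -/
noncomputable section

/-- Generalized binomial coefficient `m(m-1)⋯(m-i+1)/i!` in `ℚ`, for `m : ℤ`, `i : ℕ`. -/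
def qbinom (m : ℤ) (i : ℕ) : ℚ :=
  (∏ j ∈ Finset.range i, ((m : ℚ) - (j : ℚ))) / (Nat.factorial i : ℚ)

/-- The data of bilinear products `uₙv` (for `n : ℤ`) on a `ℂ`-vector space `V` forms an
ertex algebra: bilinearity, truncation, and the Jacobi identity in Borcherds component form,
where the (finite by truncation) sums are formalized as `finsum`s. -/
structure IsErtex {V : Type} [AddCommGroup V] [Module ℂ V]
    (mul : ℤ → V → V → V) : Prop where
  add_left : ∀ (n : ℤ) (u u' v : V), mul n (u + u') v = mul n u v + mul n u' v
  smul_left : ∀ (n : ℤ) (c : ℂ) (u v : V), mul n (c • u) v = c • mul n u v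
  add_right : ∀ (n : ℤ) (u v v' : V), mul n u (v + v') = mul n u v + mul n u v'
  smul_right : ∀ (n : ℤ) (c : ℂ) (u v : V), mul n u (c • v) = c • mul n u v
  trunc : ∀ u v : V, ∃ N : ℤ, ∀ n : ℤ, N ≤ n → mul n u v = 0
  jacobi : ∀ (u v w : V) (p q r : ℤ),
    (∑ᶠ i : ℕ, (qbinom p i : ℂ) • mul (p + q - (i : ℤ)) (mul (r + (i : ℤ)) u v) w) =
    ∑ᶠ i : ℕ, ((-1 : ℂ) ^ (i : ℕ) * (qbinom r i : ℂ)) •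
      (mul (p + r - (i : ℤ)) u (mul (q + (i : ℤ)) v w)
        - ((-1 : ℂ) ^ r) • mul (q + r - (i : ℤ)) v (mul (p + (i : ℤ)) u w))

/-- A (bundled) ertex algebra. -/
structure ErtexAlgebra where
  carrier : Type
  [addCommGroup : AddCommGroup carrier]
  [module : Module ℂ carrier]
  mul : ℤ → carrier → carrier → carrier
  isErtex : IsErtex mul

attribute [instance] ErtexAlgebra.addCommGroup ErtexAlgebra.module

/-- An ertex algebra (given by its products) is injective if `uₙv = 0` for all `n, v`
implies `u = 0`. -/
def ErtexInjectiveFun {V : Type} [AddCommGroup V] [Module ℂ V]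
    (mul : ℤ → V → V → V) : Prop :=
  ∀ u : V, (∀ (n : ℤ) (v : V), mul n u v = 0) → u = 0

/-- `f` intertwines the products `mulV` and `mulW` (ertex algebra homomorphism property). -/
def IsMulHomFun {V W : Type} [AddCommGroup V] [Module ℂ V] [AddCommGroup W] [Module ℂ W]
    (mulV : ℤ → V → V → V) (mulW : ℤ → W → W → W) (f : V →ₗ[ℂ] W) : Prop :=
  ∀ (n : ℤ) (u v : V), f (mulV n u v) = mulW n (f u) (f v)

/-- Vacuum and creation properties for the vector `one`. -/
structure IsVacuum {V : Type} [AddCommGroup V] [Module ℂ V]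
    (mul : ℤ → V → V → V) (one : V) : Prop where
  vac_minus_one : ∀ v : V, mul (-1) one v = v
  vac_ne : ∀ n : ℤ, n ≠ -1 → ∀ v : V, mul n one v = 0
  create_minus_one : ∀ u : V, mul (-1) u one = u
  create_nonneg : ∀ n : ℤ, 0 ≤ n → ∀ u : V, mul n u one = 0

/-- A (bundled) vertex algebra: an ertex algebra with a vacuum vector. -/
structure VertexAlgebra extends ErtexAlgebra where
  vac : carrier
  isVacuum : IsVacuum mul vac

/-- The `D`-derivative property: `(Du)ₙ v = -n · u_{n-1} v`. -/
def IsDDeriv {V : Type} [AddCommGroup V] [Module ℂ V]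
    (mul : ℤ → V → V → V) (D : V → V) : Prop :=
  ∀ (n : ℤ) (u v : V), mul n (D u) v = ((-n : ℤ) : ℂ) • mul (n - 1) u v

/-- The `D`-bracket derivative formula: `D(uₙv) = (Du)ₙv + uₙ(Dv)`. -/
def IsDBracket {V : Type} [AddCommGroup V] [Module ℂ V]
    (mul : ℤ → V → V → V) (D : V → V) : Prop :=
  ∀ (n : ℤ) (u v : V), D (mul n u v) = mul n (D u) v + mul n u (D v)

/-- Skew-symmetry: `uₙv = ∑_{i≥0} (-1)^{n+1+i} (1/i!) Dⁱ(v_{n+i}u)` (sum finite by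
truncation, formalized as a `finsum`). -/
def IsSkew {V : Type} [AddCommGroup V] [Module ℂ V]
    (mul : ℤ → V → V → V) (D : V → V) : Prop :=
  ∀ (n : ℤ) (u v : V), mul n u v =
    ∑ᶠ i : ℕ, ((-1 : ℂ) ^ (n + 1 + (i : ℤ)) * ((Nat.factorial i : ℂ))⁻¹) •
      D^[i] (mul (n + (i : ℤ)) v u)

/-- The three defining properties of a `D`-ertex algebra structure. -/
def IsDStructure {V : Type} [AddCommGroup V] [Module ℂ V]
    (mul : ℤ → V → V → V) (D : V → V) : Prop :=
  IsDDeriv mul D ∧ IsDBracket mul D ∧ IsSkew mul D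

/-- A (bundled) `D`-ertex algebra. -/
structure DErtexAlgebra extends ErtexAlgebra where
  D : carrier →ₗ[ℂ] carrier
  isD : IsDStructure mul ⇑D

/-- `cₙ(u) = (1/(-n-1)!) D^{-n-1} u` for `n ≤ -1`, and `0` for `n ≥ 0`. -/
def DErtexAlgebra.cfun (E : DErtexAlgebra) (n : ℤ) (u : E.carrier) : E.carrier :=
  if n ≤ -1 then ((Nat.factorial (-n - 1).toNat : ℂ))⁻¹ • (⇑E.D)^[(-n - 1).toNat] u else 0

/-- The products on `E ⊕ ℂ`:
`(u,a)ₙ(v,b) = (uₙv + b·cₙ(u) + a·δ_{n,-1}·v, a·b·δ_{n,-1})`. -/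
def DErtexAlgebra.extMul (E : DErtexAlgebra) :
    ℤ → E.carrier × ℂ → E.carrier × ℂ → E.carrier × ℂ :=
  fun n p q =>
    (E.mul n p.1 q.1 + q.2 • E.cfun n p.1 + (if n = -1 then p.2 • q.1 else 0),
      if n = -1 then p.2 * q.2 else 0)

/-- The adjoined vacuum vector `1 = (0,1)` in `E ⊕ ℂ`. -/
def DErtexAlgebra.extVac (E : DErtexAlgebra) : E.carrier × ℂ := (0, 1)

/-- The linear span of `{Dⁿ(ψ u) : n ≥ 0, u ∈ E}` inside a `D`-ertex algebra. -/
def DSpan (E : ErtexAlgebra) (F : DErtexAlgebra) (ψ : E.carrier →ₗ[ℂ] F.carrier) :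
    Submodule ℂ F.carrier :=
  Submodule.span ℂ {x | ∃ (n : ℕ) (u : E.carrier), x = (⇑F.D)^[n] (ψ u)}

/-- `ψ : E → F` is a `D`-injective ertex algebra homomorphism into the `D`-ertex algebra
`F`: it is an ertex homomorphism and the span of `{Dⁿ(ψ u)}` is an injective ertex algebra. -/
def IsDInjectiveHom (E : ErtexAlgebra) (F : DErtexAlgebra)
    (ψ : E.carrier →ₗ[ℂ] F.carrier) : Prop :=
  IsMulHomFun E.mul F.mul ψ ∧
    ∀ w : F.carrier, w ∈ DSpan E F ψ →
      (∀ n : ℤ, ∀ v ∈ DSpan E F ψ, F.mul n w v = 0) → w = 0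

/-- The linear span of `{𝒟ⁿ(ψ u) : n ≥ 0, u ∈ E}` inside a vertex algebra, where
`𝒟(v) = v₋₂1` is the derivative operator. -/
def VDSpan (E : ErtexAlgebra) (W : VertexAlgebra) (ψ : E.carrier →ₗ[ℂ] W.carrier) :
    Submodule ℂ W.carrier :=
  Submodule.span ℂ {x | ∃ (n : ℕ) (u : E.carrier), x = (fun v => W.mul (-2) v W.vac)^[n] (ψ u)}

/-- `ψ : E → W` is a `D`-injective ertex algebra homomorphism into the vertex algebra `W`
regarded as a `D`-ertex algebra via `𝒟(v) = v₋₂1`. -/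
def IsVDInjectiveHom (E : ErtexAlgebra) (W : VertexAlgebra)
    (ψ : E.carrier →ₗ[ℂ] W.carrier) : Prop :=
  IsMulHomFun E.mul W.mul ψ ∧
    ∀ w : W.carrier, w ∈ VDSpan E W ψ →
      (∀ n : ℤ, ∀ v ∈ VDSpan E W ψ, W.mul n w v = 0) → w = 0

/-!
Specialise the Jacobi identity twice. With `p = 0` only the `i = 0` term survives on the left
(as `binom(0, i) = 0` for `i > 0`), which expresses `(uₙv)ₘw` through the two iterated products
`u_{n-i}(v_{m+i}w)` and `v_{m+n-i}(u_i w)`. With `u` and `v` exchanged, `p = m` and `q = 0`,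
the left side is the sum `∑ binom(m,j)(v_{n+j}u)_{m-j}w`, and the right side consists of the
same iterated products with the two terms swapped, so it is `-(-1)ⁿ` times the first one.
-/

lemma qbinom_zero_left {i : ℕ} (hi : i ≠ 0) : qbinom 0 i = 0 := by
  unfold qbinom
  rw [Finset.prod_eq_zero (Finset.mem_range.mpr (Nat.pos_of_ne_zero hi)) (by simp)]
  simp

lemma qbinom_zero_right (m : ℤ) : qbinom m 0 = 1 := by
  simp [qbinom]

lemma neg_one_zpow_mul_self (n : ℤ) : (-1 : ℂ) ^ n * (-1 : ℂ) ^ n = 1 := by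
  rw [← zpow_add₀ (by norm_num)]
  exact Even.neg_one_zpow ⟨n, rfl⟩

namespace IsErtex

variable {V : Type} [AddCommGroup V] [Module ℂ V] {mul : ℤ → V → V → V}

theorem iterate_formula (h : IsErtex mul) (u v w : V) (q r : ℤ) :
    mul q (mul r u v) w =
      ∑ᶠ i : ℕ, ((-1 : ℂ) ^ i * (qbinom r i : ℂ)) •
        (mul (r - i) u (mul (q + i) v w) - ((-1 : ℂ) ^ r) • mul (q + r - i) v (mul i u w)) := by
  have hJ := h.jacobi u v w 0 q r
  rw [finsum_eq_single _ 0 fun i hi => by rw [qbinom_zero_left hi]; simp] at hJ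
  simpa [qbinom_zero_right] using hJ

theorem jacobi_zero_mid (h : IsErtex mul) (u v w : V) (p r : ℤ) :
    ∑ᶠ i : ℕ, (qbinom p i : ℂ) • mul (p - i) (mul (r + i) u v) w =
      ∑ᶠ i : ℕ, ((-1 : ℂ) ^ i * (qbinom r i : ℂ)) •
        (mul (p + r - i) u (mul i v w) - ((-1 : ℂ) ^ r) • mul (r - i) v (mul (p + i) u w)) := by
  simpa using h.jacobi u v w p 0 r

end IsErtex

/-- in any ertex algebra,
`(uₙv)ₘw = (-1)^{n+1} ∑_{j≥0} binom(m,j)·(v_{n+j}u)_{m-j} w`. -/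
theorem stmt_1 (E : ErtexAlgebra) (u v w : E.carrier) (m n : ℤ) :
    E.mul m (E.mul n u v) w =
      ((-1 : ℂ) ^ (n + 1)) •
        ∑ᶠ j : ℕ, (qbinom m j : ℂ) • E.mul (m - (j : ℤ)) (E.mul (n + (j : ℤ)) v u) w := by
  rw [E.isErtex.iterate_formula, E.isErtex.jacobi_zero_mid, smul_finsum]
  refine finsum_congr fun i => ?_
  rw [smul_comm ((-1 : ℂ) ^ (n + 1)), add_comm m n, zpow_add_one₀ (by norm_num)]
  congr 1
  linear_combination (norm := module)
    (neg_one_zpow_mul_self n).symm • E.mul (n - i) u (E.mul (m + i) v w)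

end
end

section
/- Let (V,Y) be an ertex algebra and D : V → V a linear map satisfying skew-symmetry, u_n v = ∑_{i≥0} (−1)^{n+1+i} (1/i!)·D^i (v_{n+i} u) for all u,v ∈ V and n ∈ ℤ (sum finite by truncation), and the D-derivative property, (Du)_n v = −n·u_{n−1} v for all u,v ∈ V and n ∈ ℤ. Then the D-bracket derivative formula holds: D(u_n v) = (Du)_n v + u_n (Dv) for all u,v ∈ V and n ∈ ℤ; consequently (V,Y,D) is a D-ertex algebra. -/
/-!
Fix `n, u, v` and put `Tⱼ = Dʲ (v_{n-1+j} u)`, which vanishes for large `j` by truncation.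
Skew-symmetry, combined with the `D`-derivative property where `D` hits an argument, expands
each of `D (uₙ v)`, `(D u)ₙ v` and `uₙ (D v)` as a finite combination of the `Tⱼ`, with
coefficients `(-1)^{n+j}/j!` times `j`, `-n` and `n + j` respectively; the formula
`D (uₙ v) = (D u)ₙ v + uₙ (D v)` is then the identity `j = -n + (n + j)`.
-/

noncomputable section

open Finset

theorem finsum_eq_sum_range_of_eq_zero {M : Type*} [AddCommMonoid M] {f : ℕ → M} {N : ℕ}
    (hf : ∀ i, N ≤ i → f i = 0) : ∑ᶠ i, f i = ∑ i ∈ range N, f i :=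
  finsum_eq_sum_of_support_subset f fun i hi => by
    by_contra hiN
    exact hi (hf i (by simpa using hiN))

section DErtex

variable {V : Type} [AddCommGroup V] [Module ℂ V] {mul : ℤ → V → V → V} {D : V →ₗ[ℂ] V}

theorem IsSkew.eq_sum_range (hskew : IsSkew mul ⇑D) {m : ℤ} {u v : V} {N : ℕ}
    (hN : ∀ j : ℕ, N ≤ j → mul (m + j) v u = 0) :
    mul m u v = ∑ j ∈ range N, ((-1 : ℂ) ^ (m + 1 + (j : ℤ)) * ((Nat.factorial j : ℂ))⁻¹) •
      (⇑D)^[j] (mul (m + j) v u) := by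
  rw [hskew]
  refine finsum_eq_sum_range_of_eq_zero fun j hj => ?_
  rw [hN j hj, iterate_map_zero, smul_zero]

theorem IsSkew.apply_eq_sum_range (hskew : IsSkew mul ⇑D) {n : ℤ} {u v : V} {N : ℕ}
    (hN : ∀ j : ℕ, N ≤ j → mul (n - 1 + j) v u = 0) :
    D (mul n u v) = ∑ j ∈ range (N + 1), ((-1 : ℂ) ^ (n + (j : ℤ)) * j *
      ((Nat.factorial j : ℂ))⁻¹) • (⇑D)^[j] (mul (n - 1 + j) v u) := by
  have hN' : ∀ j : ℕ, N ≤ j → mul (n + j) v u = 0 := fun j hj => by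
    simpa [sub_add_add_cancel] using hN (j + 1) (by omega)
  rw [hskew.eq_sum_range hN', map_sum, sum_range_succ']
  simp only [CharP.cast_eq_zero, mul_zero, zero_mul, zero_smul, add_zero, map_smul]
  refine sum_congr rfl fun j _ => ?_
  rw [← Function.iterate_succ_apply' (⇑D),
    show n - 1 + ((j + 1 : ℕ) : ℤ) = n + j by push_cast; ring]
  congr 1
  rw [Nat.factorial_succ]
  push_cast
  field_simp
  ring_nf

theorem IsSkew.mul_deriv_left_eq_sum_range (hskew : IsSkew mul ⇑D) (hderiv : IsDDeriv mul ⇑D)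
    {n : ℤ} {u v : V} {N : ℕ} (hN : ∀ j : ℕ, N ≤ j → mul (n - 1 + j) v u = 0) :
    mul n (D u) v = ∑ j ∈ range (N + 1), (-(n : ℂ) * (-1 : ℂ) ^ (n + (j : ℤ)) *
      ((Nat.factorial j : ℂ))⁻¹) • (⇑D)^[j] (mul (n - 1 + j) v u) := by
  rw [hderiv, hskew.eq_sum_range (N := N + 1) fun j hj => hN j (by omega), smul_sum,
    sub_add_cancel]
  simp only [smul_smul, mul_assoc, Int.cast_neg]

theorem IsSkew.mul_deriv_right_eq_sum_range (hskew : IsSkew mul ⇑D) (hderiv : IsDDeriv mul ⇑D)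
    {n : ℤ} {u v : V} {N : ℕ} (hN : ∀ j : ℕ, N ≤ j → mul (n - 1 + j) v u = 0) :
    mul n u (D v) = ∑ j ∈ range (N + 1), ((-1 : ℂ) ^ (n + (j : ℤ)) * (n + j) *
      ((Nat.factorial j : ℂ))⁻¹) • (⇑D)^[j] (mul (n - 1 + j) v u) := by
  have hshift : ∀ j : ℕ, mul (n + j) (D v) u = ((-(n + j) : ℤ) : ℂ) • mul (n - 1 + j) v u :=
    fun j => by rw [hderiv, sub_add_eq_add_sub]
  rw [hskew.eq_sum_range (N := N + 1) fun j hj => by rw [hshift, hN j (by omega), smul_zero]]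
  refine sum_congr rfl fun j _ => ?_
  rw [hshift, ← Module.End.pow_apply, map_smul, Module.End.pow_apply, smul_smul,
    add_right_comm, zpow_add_one₀ (by norm_num)]
  push_cast
  ring_nf

theorem IsSkew.isDBracket (hskew : IsSkew mul ⇑D) (hderiv : IsDDeriv mul ⇑D)
    (htrunc : ∀ u v : V, ∃ N : ℤ, ∀ n : ℤ, N ≤ n → mul n u v = 0) :
    IsDBracket mul ⇑D := by
  intro n u v
  obtain ⟨N₀, hN₀⟩ := htrunc v u
  have hN : ∀ j : ℕ, (N₀ - n + 1).toNat ≤ j → mul (n - 1 + j) v u = 0 :=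
    fun j hj => hN₀ _ (by omega)
  rw [hskew.apply_eq_sum_range hN, hskew.mul_deriv_left_eq_sum_range hderiv hN,
    hskew.mul_deriv_right_eq_sum_range hderiv hN, ← sum_add_distrib]
  refine sum_congr rfl fun j _ => ?_
  rw [← add_smul]
  ring_nf

end DErtex

/-- skew-symmetry and the D-derivative property imply the D-bracket
derivative formula; consequently `(V,Y,D)` is a `D`-ertex algebra. -/
theorem stmt_3 (E : ErtexAlgebra) (D : E.carrier →ₗ[ℂ] E.carrier)
    (hskew : IsSkew E.mul ⇑D) (hderiv : IsDDeriv E.mul ⇑D) :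
    IsDBracket E.mul ⇑D ∧ IsDStructure E.mul ⇑D := by
  have hbracket := hskew.isDBracket hderiv E.isErtex.trunc
  exact ⟨hbracket, hderiv, hbracket, hskew⟩

end
end

section
/- Let V be a ℂ-vector space, k ∈ ℕ, and let a, b : ℤ → End(V) be families of endomorphisms (thought of as the coefficients of formal series a(x) = ∑_{n∈ℤ} a_n x^{−n−1}, b(x) = ∑_{n∈ℤ} b_n x^{−n−1}). Suppose a and b are mutually local of order k, i.e., for all m, n ∈ ℤ, ∑_{i=0}^{k} (−1)^i C(k,i) · a_{m+k−i} ∘ b_{n+i} = ∑_{i=0}^{k} (−1)^i C(k,i) · b_{n+i} ∘ a_{m+k−i}, where C(k,i) is the ordinary binomial coefficient. Define a′_n = −n · a_{n−1} for n ∈ ℤ (the coefficients of the formal derivative a′(x)). Then a′ and b are mutually local of order k+1: for all m, n ∈ ℤ, ∑_{i=0}^{k+1} (−1)^i C(k+1,i) · a′_{m+k+1−i} ∘ b_{n+i} = ∑_{i=0}^{k+1} (−1)^i C(k+1,i) · b_{n+i} ∘ a′_{m+k+1−i}. -/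
noncomputable section

/-! Since `a′_{m+k+1-i} = (i - (m+k+1)) a_{m+k-i}`, the order-`k+1` sum for `a′` and `b` is a
binomial sum of the products `a_{m+k-i} b_{n+i}` with weights `i - (m+k+1)`. Pascal's rule and
`i C(k+1,i) = (k+1) C(k,i-1)` turn it into a combination of the order-`k` locality sums at
`(m, n)` and at `(m-1, n+1)`, both of which are symmetric in `a` and `b` by hypothesis. -/

open Finset

theorem Finset.sum_range_choose_succ_mul_add_smul {R M : Type*} [CommRing R] [AddCommGroup M]
    [Module R M] (k : ℕ) (c : R) (X : ℕ → M) :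
    ∑ i ∈ range (k + 2), ((-1 : R) ^ i * (k + 1).choose i * (c + i)) • X i =
      c • ∑ i ∈ range (k + 1), ((-1 : R) ^ i * k.choose i) • X i -
        (c + k + 1) • ∑ i ∈ range (k + 1), ((-1 : R) ^ i * k.choose i) • X (i + 1) := by
  have pascal (i : ℕ) : ((k + 1).choose (i + 1) : R) = k.choose i + k.choose (i + 1) := by
    rw [Nat.choose_succ_succ', Nat.cast_add]
  have absorb (i : ℕ) : ((k + 1).choose (i + 1) : R) * (i + 1) = (k + 1) * k.choose i := by
    exact_mod_cast congrArg (Nat.cast : ℕ → R) (Nat.add_one_mul_choose_eq k i).symm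
  have extend : ∑ i ∈ range (k + 1), ((-1 : R) ^ i * k.choose i) • X i =
      ∑ i ∈ range (k + 2), ((-1 : R) ^ i * k.choose i) • X i := by
    simp [sum_range_succ _ (k + 1), Nat.choose_succ_self]
  rw [extend, sum_range_succ' _ (k + 1), sum_range_succ' _ (k + 1), smul_add, add_sub_right_comm,
    smul_sum, smul_sum, ← sum_sub_distrib]
  congr 1
  · refine sum_congr rfl fun i _ => ?_
    rw [smul_smul, smul_smul, ← sub_smul]
    congr 1
    push_cast
    linear_combination (-1 : R) ^ (i + 1) * (c * pascal i + absorb i)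
  · simp

/-- if `a(x)` and `b(x)` are mutually local of order `k`, then the formal
derivative `a′(x)` (with coefficients `a′ₙ = -n·a_{n-1}`) and `b(x)` are mutually local
of order `k+1`. -/
theorem stmt_7 (V : Type) [AddCommGroup V] [Module ℂ V] (k : ℕ)
    (a b a' : ℤ → Module.End ℂ V)
    (ha' : ∀ n : ℤ, a' n = ((-n : ℤ) : ℂ) • a (n - 1))
    (hloc : ∀ m n : ℤ,
      ∑ i ∈ Finset.range (k + 1), ((-1 : ℂ) ^ i * (Nat.choose k i : ℂ)) •
          (a (m + (k : ℤ) - (i : ℤ)) * b (n + (i : ℤ))) =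
      ∑ i ∈ Finset.range (k + 1), ((-1 : ℂ) ^ i * (Nat.choose k i : ℂ)) •
          (b (n + (i : ℤ)) * a (m + (k : ℤ) - (i : ℤ)))) :
    ∀ m n : ℤ,
      ∑ i ∈ Finset.range (k + 2), ((-1 : ℂ) ^ i * (Nat.choose (k + 1) i : ℂ)) •
          (a' (m + (k : ℤ) + 1 - (i : ℤ)) * b (n + (i : ℤ))) =
      ∑ i ∈ Finset.range (k + 2), ((-1 : ℂ) ^ i * (Nat.choose (k + 1) i : ℂ)) •
          (b (n + (i : ℤ)) * a' (m + (k : ℤ) + 1 - (i : ℤ))) := by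
  intro m n
  have ha'_shift (i : ℕ) : a' (m + k + 1 - i) = (-(m + k + 1 : ℂ) + i) • a (m + k - i) := by
    rw [ha', show m + k + 1 - i - 1 = m + k - i by ring]
    congr 1
    push_cast
    ring
  have hloc_shift := hloc (m - 1) (n + 1)
  simp only [show ∀ i : ℕ, m - 1 + k - i = m + k - ↑(i + 1) by intro i; push_cast; ring,
    show ∀ i : ℕ, n + 1 + i = n + ↑(i + 1) by intro i; push_cast; ring] at hloc_shift
  simp only [ha'_shift, smul_mul_assoc, mul_smul_comm, smul_smul,
    sum_range_choose_succ_mul_add_smul, hloc m n, hloc_shift]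

end
end

section
/- For every injective ertex algebra (E,Y) there exist an injective D-ertex algebra (E′, Y′, D) and an injective ertex algebra homomorphism i : E → E′ such that E′ is the linear span of {D^n i(u) : n ≥ 0, u ∈ E} (i.e., E′ is generated by i(E) under D). -/
/-!
Adjoin formal derivatives. On finite sums `∑ Dʲ uⱼ` with `uⱼ ∈ E` the derivative property
`(D u)_n = -n u_{n-1}` and the bracket formula `u_n (D v) = D (u_n v) + n u_{n-1} v` determine
the products, and the Jacobi identity propagates from `E`: under `D` in any of its three arguments,
each side of the Borcherds identity obeys the same recursion in `(p, q, r)`. Dividing out the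
vectors `w` with `w_n E = 0` gives an injective ertex algebra containing `E` and spanned by the
`Dʲ E`. In an injective ertex algebra skew-symmetry comes for free: by the Jacobi identity its two
sides have the same products with every vector on the right.
-/

noncomputable section

open Function

namespace Ertex

lemma qbinom_zero_right (m : ℤ) : (qbinom m 0 : ℂ) = 1 := by
  simp [qbinom]

lemma qbinom_zero_left {i : ℕ} (hi : i ≠ 0) : (qbinom 0 i : ℂ) = 0 := by
  rw [qbinom, Finset.prod_eq_zero (Finset.mem_range.2 (Nat.pos_of_ne_zero hi)) (by simp)]
  simp

lemma succ_mul_qbinom_succ (m : ℤ) (i : ℕ) :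
    ((i : ℂ) + 1) * qbinom m (i + 1) = m * qbinom (m - 1) i := by
  have hprod : ∏ j ∈ Finset.range i, ((m : ℚ) - ((j + 1 : ℕ) : ℚ)) =
      ∏ j ∈ Finset.range i, (((m - 1 : ℤ) : ℚ) - j) :=
    Finset.prod_congr rfl fun j _ => by push_cast; ring
  rw [qbinom, qbinom, Finset.prod_range_succ', hprod, Nat.factorial_succ]
  push_cast
  field_simp
  ring

lemma sub_mul_qbinom (m : ℤ) (i : ℕ) : ((m : ℂ) - i) * qbinom m i = m * qbinom (m - 1) i := by
  rw [← succ_mul_qbinom_succ, qbinom, qbinom, Finset.prod_range_succ, Nat.factorial_succ]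
  push_cast
  field_simp

lemma finsum_nat_eq_finsum_succ {M : Type*} [AddCommMonoid M] {F : ℕ → M} (h0 : F 0 = 0) :
    ∑ᶠ i, F i = ∑ᶠ i, F (i + 1) := by
  rw [← finsum_mem_range (g := fun i => i + 1) (add_left_injective 1), ← finsum_mem_univ]
  refine finsum_mem_inter_support_eq' _ _ _ fun i hi => ?_
  simp only [Set.mem_univ, Set.mem_range, true_iff]
  exact ⟨i - 1, Nat.sub_add_cancel (Nat.pos_of_ne_zero (by rintro rfl; exact hi h0))⟩

lemma hasFiniteSupport_of_forall_le {M : Type*} [Zero M] {f : ℕ → M} (B : ℤ)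
    (hf : ∀ i : ℕ, B ≤ i → f i = 0) : HasFiniteSupport f :=
  (Set.finite_Iio B.toNat).subset fun i hi => Set.mem_Iio.2 <| by
    by_contra hle
    exact hi (hf i (by omega))

lemma eventually_zero_add {M : Type*} [AddZeroClass M] {f g : ℤ → M}
    (hf : ∃ N : ℤ, ∀ n, N ≤ n → f n = 0) (hg : ∃ N : ℤ, ∀ n, N ≤ n → g n = 0) :
    ∃ N : ℤ, ∀ n, N ≤ n → f n + g n = 0 :=
  let ⟨N, hN⟩ := hf
  let ⟨N', hN'⟩ := hg
  ⟨max N N', fun n hn => by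
    rw [hN n (le_of_max_le_left hn), hN' n (le_of_max_le_right hn), add_zero]⟩

def IsTruncated {M : Type*} [Zero M] (T : ℤ → ℤ → M) : Prop :=
  ∃ N : ℤ, ∀ m n, N ≤ n → T m n = 0

lemma IsTruncated.hasFiniteSupport {M N : Type*} [Zero M] [Zero N] {T : ℤ → ℤ → M}
    (hT : IsTruncated T) (a b : ℤ) {f : ℕ → N}
    (hf : ∀ i : ℕ, T (a - i) (b + i) = 0 → f i = 0) : HasFiniteSupport f :=
  let ⟨N, hN⟩ := hT
  hasFiniteSupport_of_forall_le (N - b) fun i hi => hf i (hN _ _ (by omega))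

lemma IsTruncated.add {M : Type*} [AddZeroClass M] {T S : ℤ → ℤ → M} (hT : IsTruncated T)
    (hS : IsTruncated S) : IsTruncated fun m n => T m n + S m n :=
  let ⟨N, hN⟩ := hT
  let ⟨N', hN'⟩ := hS
  ⟨max N N', fun m n hn => by
    simp [hN m n (le_of_max_le_left hn), hN' m n (le_of_max_le_right hn)]⟩

section BinomialSum

variable {V W : Type*} [AddCommGroup V] [Module ℂ V] [AddCommGroup W] [Module ℂ W]

-- Both sides of the Jacobi identity are sums of this shape.
def binomialSum (ε : ℂ) (c : ℤ) (T : ℤ → ℤ → V) (a b : ℤ) : V :=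
  ∑ᶠ i : ℕ, (ε ^ i * qbinom c i) • T (a - i) (b + i)

variable {T S U : ℤ → ℤ → V}

lemma IsTruncated.smul (hT : IsTruncated T) (k : ℤ → ℤ → ℂ) :
    IsTruncated fun m n => k m n • T m n :=
  let ⟨N, hN⟩ := hT
  ⟨N, fun m n hn => by simp [hN m n hn]⟩

lemma IsTruncated.map (hT : IsTruncated T) (L : V →ₗ[ℂ] W) :
    IsTruncated fun m n => L (T m n) :=
  let ⟨N, hN⟩ := hT
  ⟨N, fun m n hn => by simp [hN m n hn]⟩

lemma binomialSum_add (hT : IsTruncated T) (hS : IsTruncated S)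
    (hU : ∀ m n, U m n = T m n + S m n) (ε : ℂ) (c a b : ℤ) :
    binomialSum ε c U a b = binomialSum ε c T a b + binomialSum ε c S a b := by
  simp only [binomialSum, hU, smul_add]
  exact finsum_add_distrib (hT.hasFiniteSupport a b fun i h => by simp [h])
    (hS.hasFiniteSupport a b fun i h => by simp [h])

lemma binomialSum_smul (k ε : ℂ) (c a b : ℤ) :
    binomialSum ε c (fun m n => k • T m n) a b = k • binomialSum ε c T a b := by
  simp only [binomialSum, smul_finsum, smul_comm k]

lemma binomialSum_map (hT : IsTruncated T) (L : V →ₗ[ℂ] W) (ε : ℂ) (c a b : ℤ) :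
    L (binomialSum ε c T a b) = binomialSum ε c (fun m n => L (T m n)) a b :=
  (L.toAddMonoidHom.map_finsum (hT.hasFiniteSupport a b fun i h => by simp [h])).trans
    (finsum_congr fun _ => L.map_smul _ _)

lemma binomialSum_eq_zero (hT : ∀ m n, T m n = 0) (ε : ℂ) (c a b : ℤ) :
    binomialSum ε c T a b = 0 := by
  simp [binomialSum, hT]

lemma binomialSum_mul_fst (hT : IsTruncated T) (ε : ℂ) (c a b : ℤ) :
    binomialSum ε c (fun m n => (m : ℂ) • T (m - 1) n) a b =
      ((a : ℂ) - c) • binomialSum ε c T (a - 1) b +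
        (c : ℂ) • binomialSum ε (c - 1) T (a - 1) b := by
  simp only [binomialSum, smul_finsum, smul_smul]
  rw [← finsum_add_distrib (hT.hasFiniteSupport (a - 1) b fun i h => by simp [h])
    (hT.hasFiniteSupport (a - 1) b fun i h => by simp [h])]
  refine finsum_congr fun i => ?_
  rw [show a - (i : ℤ) - 1 = a - 1 - i by ring, ← add_smul]
  congr 1
  have h := sub_mul_qbinom c i
  push_cast
  linear_combination ε ^ i * h

lemma binomialSum_mul_snd (hT : IsTruncated T) (ε : ℂ) (c a b : ℤ) :
    binomialSum ε c (fun m n => (n : ℂ) • T m (n - 1)) a b =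
      (b : ℂ) • binomialSum ε c T a (b - 1) +
        (ε * c) • binomialSum ε (c - 1) T (a - 1) b := by
  have hsplit : ∀ i : ℕ,
      (ε ^ i * qbinom c i) • ((b + i : ℤ) : ℂ) • T (a - i) (b + i - 1) =
      ((b : ℂ) * (ε ^ i * qbinom c i)) • T (a - i) (b - 1 + i) +
        ((i : ℂ) * (ε ^ i * qbinom c i)) • T (a - i) (b - 1 + i) := fun i => by
    rw [show b + (i : ℤ) - 1 = b - 1 + i by ring, smul_smul, ← add_smul]
    congr 1
    push_cast
    ring
  -- the factor `i` is absorbed into the binomial coefficient after shifting `i ↦ i + 1`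
  have hshift : ∑ᶠ i : ℕ, ((i : ℂ) * (ε ^ i * qbinom c i)) • T (a - i) (b - 1 + i) =
      (ε * c) • binomialSum ε (c - 1) T (a - 1) b := by
    rw [finsum_nat_eq_finsum_succ (by simp), binomialSum, smul_finsum]
    refine finsum_congr fun i => ?_
    rw [smul_smul, show a - ((i + 1 : ℕ) : ℤ) = a - 1 - i by push_cast; ring,
      show b - 1 + ((i + 1 : ℕ) : ℤ) = b + i by push_cast; ring]
    congr 1
    have h := succ_mul_qbinom_succ c i
    push_cast
    linear_combination ε ^ (i + 1) * h
  simp only [binomialSum]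
  rw [finsum_congr hsplit,
    finsum_add_distrib (hT.hasFiniteSupport a (b - 1) fun i h => by simp [h])
      (hT.hasFiniteSupport a (b - 1) fun i h => by simp [h]), hshift, smul_finsum]
  simp only [smul_smul]
  rfl

theorem binomialSum_of_recursion (hT : IsTruncated T) (L : V →ₗ[ℂ] V) (α β : ℂ)
    (hU : ∀ m n, U m n =
      L (T m n) + α • (m : ℂ) • T (m - 1) n + β • (n : ℂ) • T m (n - 1))
    (ε : ℂ) (c a b : ℤ) :
    binomialSum ε c U a b = L (binomialSum ε c T a b) +
      (α * (a - c)) • binomialSum ε c T (a - 1) b + (β * b) • binomialSum ε c T a (b - 1) +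
      ((α + β * ε) * c) • binomialSum ε (c - 1) T (a - 1) b := by
  have hT₁ : IsTruncated fun m n => (m : ℂ) • T (m - 1) n := by
    obtain ⟨N, hN⟩ := hT
    exact ⟨N, fun m n hn => by simp [hN _ _ hn]⟩
  have hT₂ : IsTruncated fun m n => (n : ℂ) • T m (n - 1) := by
    obtain ⟨N, hN⟩ := hT
    exact ⟨N + 1, fun m n hn => by simp [hN m (n - 1) (by omega)]⟩
  rw [binomialSum_add ((hT.map L).add (hT₁.smul fun _ _ => α)) (hT₂.smul fun _ _ => β) hU,
    binomialSum_add (hT.map L) (hT₁.smul fun _ _ => α) fun _ _ => rfl, binomialSum_smul,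
    binomialSum_smul, ← binomialSum_map hT, binomialSum_mul_fst hT, binomialSum_mul_snd hT]
  module

end BinomialSum

section Products

variable {V W : Type} [AddCommGroup V] [Module ℂ V] [AddCommGroup W] [Module ℂ W]
  (μ : ℤ → V →ₗ[ℂ] V →ₗ[ℂ] V)

def IsTruncatedMul : Prop :=
  ∀ u v : V, ∃ N : ℤ, ∀ n, N ≤ n → μ n u v = 0

def iterateFamily (u v w : V) (m n : ℤ) : V := μ m (μ n u v) w

def productFamily (u v w : V) (m n : ℤ) : V := μ m u (μ n v w)

/-- `∑ᵢ (p choose i) (u_{r+i} v)_{p+q-i} w` -/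
def iterateSum (u v w : V) (p q r : ℤ) : V := binomialSum 1 p (iterateFamily μ u v w) (p + q) r

/-- `∑ᵢ (-1)ⁱ (r choose i) u_{p+r-i} (v_{q+i} w)` -/
def productSum (u v w : V) (p q r : ℤ) : V :=
  binomialSum (-1) r (productFamily μ u v w) (p + r) q

def JacobiAt (u v w : V) : Prop :=
  ∀ p q r : ℤ, iterateSum μ u v w p q r =
    productSum μ u v w p q r - (-1 : ℂ) ^ r • productSum μ v u w q p r

variable {μ}

lemma IsTruncatedMul.iterateFamily (htr : IsTruncatedMul μ) (u v w : V) :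
    IsTruncated (iterateFamily μ u v w) :=
  let ⟨N, hN⟩ := htr u v
  ⟨N, fun m n hn => by simp [Ertex.iterateFamily, hN n hn]⟩

lemma IsTruncatedMul.productFamily (htr : IsTruncatedMul μ) (u v w : V) :
    IsTruncated (productFamily μ u v w) :=
  let ⟨N, hN⟩ := htr v w
  ⟨N, fun m n hn => by simp [Ertex.productFamily, hN n hn]⟩

lemma jacobi_iff_jacobiAt (htr : IsTruncatedMul μ) (u v w : V) :
    (∀ p q r : ℤ,
      (∑ᶠ i : ℕ, (qbinom p i : ℂ) • μ (p + q - (i : ℤ)) (μ (r + (i : ℤ)) u v) w) =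
      ∑ᶠ i : ℕ, ((-1 : ℂ) ^ (i : ℕ) * (qbinom r i : ℂ)) •
        (μ (p + r - (i : ℤ)) u (μ (q + (i : ℤ)) v w)
          - ((-1 : ℂ) ^ r) • μ (q + r - (i : ℤ)) v (μ (p + (i : ℤ)) u w))) ↔
      JacobiAt μ u v w := by
  refine forall₃_congr fun p q r => ?_
  have hR : (∑ᶠ i : ℕ, ((-1 : ℂ) ^ (i : ℕ) * (qbinom r i : ℂ)) •
      (μ (p + r - (i : ℤ)) u (μ (q + (i : ℤ)) v w)
        - ((-1 : ℂ) ^ r) • μ (q + r - (i : ℤ)) v (μ (p + (i : ℤ)) u w))) =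
      productSum μ u v w p q r - (-1 : ℂ) ^ r • productSum μ v u w q p r := by
    simp only [productSum, binomialSum, productFamily, smul_sub, smul_finsum,
      smul_comm _ ((-1 : ℂ) ^ r)]
    exact finsum_sub_distrib
      ((htr.productFamily u v w).hasFiniteSupport (p + r) q fun i h => by
        simp only [productFamily] at h; simp [h])
      ((htr.productFamily v u w).hasFiniteSupport (q + r) p fun i h => by
        simp only [productFamily] at h; simp [h])
  simp only [hR, iterateSum, binomialSum, iterateFamily, one_pow, one_mul]

lemma isErtex_of_jacobiAt (htr : IsTruncatedMul μ) (hJ : ∀ u v w, JacobiAt μ u v w) :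
    IsErtex (μ · · ·) where
  add_left n u u' v := by simp
  smul_left n c u v := by simp
  add_right n u v v' := by simp
  smul_right n c u v := by simp
  trunc := htr
  jacobi u v w := (jacobi_iff_jacobiAt htr u v w).2 (hJ u v w)

lemma IsErtex.jacobiAt (hE : IsErtex (μ · · ·)) (u v w : V) : JacobiAt μ u v w :=
  (jacobi_iff_jacobiAt hE.trunc u v w).1 (hE.jacobi u v w)

section Map

variable {μ' : ℤ → W →ₗ[ℂ] W →ₗ[ℂ] W} {φ : V →ₗ[ℂ] W}

lemma map_iterateSum (htr : IsTruncatedMul μ) (hφ : IsMulHomFun (μ · · ·) (μ' · · ·) φ)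
    (u v w : V) (p q r : ℤ) :
    φ (iterateSum μ u v w p q r) = iterateSum μ' (φ u) (φ v) (φ w) p q r := by
  have hφ' : ∀ n a b, φ (μ n a b) = μ' n (φ a) (φ b) := hφ
  rw [iterateSum, binomialSum_map (htr.iterateFamily u v w)]
  simp only [iterateFamily, hφ']
  rfl

lemma map_productSum (htr : IsTruncatedMul μ) (hφ : IsMulHomFun (μ · · ·) (μ' · · ·) φ)
    (u v w : V) (p q r : ℤ) :
    φ (productSum μ u v w p q r) = productSum μ' (φ u) (φ v) (φ w) p q r := by
  have hφ' : ∀ n a b, φ (μ n a b) = μ' n (φ a) (φ b) := hφ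
  rw [productSum, binomialSum_map (htr.productFamily u v w)]
  simp only [productFamily, hφ']
  rfl

lemma JacobiAt.map (htr : IsTruncatedMul μ) (hφ : IsMulHomFun (μ · · ·) (μ' · · ·) φ)
    {u v w : V} (h : JacobiAt μ u v w) : JacobiAt μ' (φ u) (φ v) (φ w) := fun p q r => by
  rw [← map_iterateSum htr hφ, ← map_productSum htr hφ, ← map_productSum htr hφ, h p q r,
    map_sub, map_smul]

end Map

section Additivity

variable {u u' v v' w w' : V} {p q r : ℤ}

lemma iterateSum_add_left (htr : IsTruncatedMul μ) :
    iterateSum μ (u + u') v w p q r = iterateSum μ u v w p q r + iterateSum μ u' v w p q r :=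
  binomialSum_add (htr.iterateFamily u v w) (htr.iterateFamily u' v w)
    (fun m n => by simp [iterateFamily]) _ _ _ _

lemma iterateSum_add_mid (htr : IsTruncatedMul μ) :
    iterateSum μ u (v + v') w p q r = iterateSum μ u v w p q r + iterateSum μ u v' w p q r :=
  binomialSum_add (htr.iterateFamily u v w) (htr.iterateFamily u v' w)
    (fun m n => by simp [iterateFamily]) _ _ _ _

lemma iterateSum_add_right (htr : IsTruncatedMul μ) :
    iterateSum μ u v (w + w') p q r = iterateSum μ u v w p q r + iterateSum μ u v w' p q r :=
  binomialSum_add (htr.iterateFamily u v w) (htr.iterateFamily u v w')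
    (fun m n => by simp [iterateFamily]) _ _ _ _

lemma productSum_add_left (htr : IsTruncatedMul μ) :
    productSum μ (u + u') v w p q r = productSum μ u v w p q r + productSum μ u' v w p q r :=
  binomialSum_add (htr.productFamily u v w) (htr.productFamily u' v w)
    (fun m n => by simp [productFamily]) _ _ _ _

lemma productSum_add_mid (htr : IsTruncatedMul μ) :
    productSum μ u (v + v') w p q r = productSum μ u v w p q r + productSum μ u v' w p q r :=
  binomialSum_add (htr.productFamily u v w) (htr.productFamily u v' w)
    (fun m n => by simp [productFamily]) _ _ _ _

lemma productSum_add_right (htr : IsTruncatedMul μ) :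
    productSum μ u v (w + w') p q r = productSum μ u v w p q r + productSum μ u v w' p q r :=
  binomialSum_add (htr.productFamily u v w) (htr.productFamily u v w')
    (fun m n => by simp [productFamily]) _ _ _ _

lemma JacobiAt.add_left (htr : IsTruncatedMul μ) (h : JacobiAt μ u v w)
    (h' : JacobiAt μ u' v w) :
    JacobiAt μ (u + u') v w := fun p q r => by
  rw [iterateSum_add_left htr, productSum_add_left htr, productSum_add_mid htr, h, h']
  module

lemma JacobiAt.add_mid (htr : IsTruncatedMul μ) (h : JacobiAt μ u v w) (h' : JacobiAt μ u v' w) :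
    JacobiAt μ u (v + v') w := fun p q r => by
  rw [iterateSum_add_mid htr, productSum_add_mid htr, productSum_add_left htr, h, h']
  module

lemma JacobiAt.add_right (htr : IsTruncatedMul μ) (h : JacobiAt μ u v w)
    (h' : JacobiAt μ u v w') :
    JacobiAt μ u v (w + w') := fun p q r => by
  rw [iterateSum_add_right htr, productSum_add_right htr, productSum_add_right htr, h, h']
  module

end Additivity

section Derivation

variable {D : V →ₗ[ℂ] V}

lemma mul_D_left (hDer : IsDDeriv (μ · · ·) D) (n : ℤ) (a b : V) :
    μ n (D a) b = -((n : ℂ) • μ (n - 1) a b) := by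
  have h : μ n (D a) b = ((-n : ℤ) : ℂ) • μ (n - 1) a b := hDer n a b
  rw [h]
  push_cast
  exact neg_smul _ _

lemma mul_D_right (hDer : IsDDeriv (μ · · ·) D) (hBr : IsDBracket (μ · · ·) D)
    (n : ℤ) (a b : V) :
    μ n a (D b) = D (μ n a b) + (n : ℂ) • μ (n - 1) a b := by
  have h : D (μ n a b) = μ n (D a) b + μ n a (D b) := hBr n a b
  rw [h, mul_D_left hDer]
  abel

lemma iterateSum_D_left (hDer : IsDDeriv (μ · · ·) D) (htr : IsTruncatedMul μ) (u v w : V)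
    (p q r : ℤ) : iterateSum μ (D u) v w p q r =
      -((r : ℂ) • iterateSum μ u v w p q (r - 1)) -
        (p : ℂ) • iterateSum μ u v w (p - 1) q r := by
  rw [iterateSum, binomialSum_of_recursion (htr.iterateFamily u v w) 0 0 (-1) fun m n => by
    simp only [iterateFamily, mul_D_left hDer, map_neg, map_smul, LinearMap.neg_apply,
      LinearMap.smul_apply, LinearMap.zero_apply]
    module]
  rw [iterateSum, iterateSum, show p - 1 + q = p + q - 1 by ring, LinearMap.zero_apply]
  module

lemma iterateSum_D_mid (hDer : IsDDeriv (μ · · ·) D) (hBr : IsDBracket (μ · · ·) D)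
    (htr : IsTruncatedMul μ) (u v w : V) (p q r : ℤ) : iterateSum μ u (D v) w p q r =
      (r : ℂ) • iterateSum μ u v w p q (r - 1) -
        (q : ℂ) • iterateSum μ u v w p (q - 1) r := by
  rw [iterateSum, binomialSum_of_recursion (htr.iterateFamily u v w) 0 (-1) 1 fun m n => by
    simp only [iterateFamily, mul_D_right hDer hBr, mul_D_left hDer, map_add, map_smul,
      LinearMap.add_apply, LinearMap.smul_apply, LinearMap.zero_apply]
    module]
  rw [iterateSum, iterateSum, show p + (q - 1) = p + q - 1 by ring, LinearMap.zero_apply]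
  module

lemma iterateSum_D_right (hDer : IsDDeriv (μ · · ·) D) (hBr : IsDBracket (μ · · ·) D)
    (htr : IsTruncatedMul μ) (u v w : V) (p q r : ℤ) : iterateSum μ u v (D w) p q r =
      D (iterateSum μ u v w p q r) + (q : ℂ) • iterateSum μ u v w p (q - 1) r +
        (p : ℂ) • iterateSum μ u v w (p - 1) q r := by
  rw [iterateSum, binomialSum_of_recursion (htr.iterateFamily u v w) D 1 0 fun m n => by
    simp only [iterateFamily, mul_D_right hDer hBr]
    module]
  rw [iterateSum, iterateSum, iterateSum, show p + (q - 1) = p + q - 1 by ring,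
    show p - 1 + q = p + q - 1 by ring]
  module

lemma productSum_D_left (hDer : IsDDeriv (μ · · ·) D) (htr : IsTruncatedMul μ) (u v w : V)
    (p q r : ℤ) : productSum μ (D u) v w p q r =
      -((p : ℂ) • productSum μ u v w (p - 1) q r) -
        (r : ℂ) • productSum μ u v w p q (r - 1) := by
  rw [productSum, binomialSum_of_recursion (htr.productFamily u v w) 0 (-1) 0 fun m n => by
    simp only [productFamily, mul_D_left hDer, LinearMap.zero_apply]
    module]
  rw [productSum, productSum, show p - 1 + r = p + r - 1 by ring,
    show p + (r - 1) = p + r - 1 by ring, LinearMap.zero_apply]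
  module

lemma productSum_D_mid (hDer : IsDDeriv (μ · · ·) D) (htr : IsTruncatedMul μ) (u v w : V)
    (p q r : ℤ) : productSum μ u (D v) w p q r =
      -((q : ℂ) • productSum μ u v w p (q - 1) r) +
        (r : ℂ) • productSum μ u v w p q (r - 1) := by
  rw [productSum, binomialSum_of_recursion (htr.productFamily u v w) 0 0 (-1) fun m n => by
    simp only [productFamily, mul_D_left hDer, map_neg, map_smul, LinearMap.zero_apply]
    module]
  rw [productSum, productSum, show p + (r - 1) = p + r - 1 by ring, LinearMap.zero_apply]
  module

lemma productSum_D_right (hDer : IsDDeriv (μ · · ·) D) (hBr : IsDBracket (μ · · ·) D)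
    (htr : IsTruncatedMul μ) (u v w : V) (p q r : ℤ) : productSum μ u v (D w) p q r =
      D (productSum μ u v w p q r) + (p : ℂ) • productSum μ u v w (p - 1) q r +
        (q : ℂ) • productSum μ u v w p (q - 1) r := by
  rw [productSum, binomialSum_of_recursion (htr.productFamily u v w) D 1 1 fun m n => by
    simp only [productFamily, mul_D_right hDer hBr, map_add, map_smul]
    module]
  rw [productSum, productSum, productSum, show p - 1 + r = p + r - 1 by ring]
  module

lemma neg_one_zpow_sub_one (r : ℤ) : (-1 : ℂ) ^ (r - 1) = -(-1) ^ r := by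
  rw [zpow_sub_one₀ (by norm_num), inv_neg, inv_one, mul_neg_one]

variable {u v w : V}

lemma JacobiAt.D_left (hDer : IsDDeriv (μ · · ·) D) (htr : IsTruncatedMul μ)
    (h : JacobiAt μ u v w) : JacobiAt μ (D u) v w := fun p q r => by
  rw [iterateSum_D_left hDer htr, productSum_D_left hDer htr, productSum_D_mid hDer htr,
    h p q (r - 1), h (p - 1) q r, neg_one_zpow_sub_one]
  module

lemma JacobiAt.D_mid (hDer : IsDDeriv (μ · · ·) D) (hBr : IsDBracket (μ · · ·) D)
    (htr : IsTruncatedMul μ) (h : JacobiAt μ u v w) : JacobiAt μ u (D v) w := fun p q r => by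
  rw [iterateSum_D_mid hDer hBr htr, productSum_D_mid hDer htr, productSum_D_left hDer htr,
    h p q (r - 1), h p (q - 1) r, neg_one_zpow_sub_one]
  module

lemma JacobiAt.D_right (hDer : IsDDeriv (μ · · ·) D) (hBr : IsDBracket (μ · · ·) D)
    (htr : IsTruncatedMul μ) (h : JacobiAt μ u v w) : JacobiAt μ u v (D w) := fun p q r => by
  rw [iterateSum_D_right hDer hBr htr, productSum_D_right hDer hBr htr,
    productSum_D_right hDer hBr htr, h p q r, h p (q - 1) r, h (p - 1) q r, map_sub, map_smul]
  module

lemma JacobiAt.iterate (hDer : IsDDeriv (μ · · ·) D) (hBr : IsDBracket (μ · · ·) D)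
    (htr : IsTruncatedMul μ) (h : JacobiAt μ u v w) (j k l : ℕ) :
    JacobiAt μ (D^[j] u) (D^[k] v) (D^[l] w) := by
  induction j with
  | succ j ih => rw [iterate_succ_apply']; exact ih.D_left hDer htr
  | zero =>
    induction k with
    | succ k ih => rw [iterate_succ_apply']; exact ih.D_mid hDer hBr htr
    | zero =>
      induction l with
      | succ l ih => rw [iterate_succ_apply']; exact ih.D_right hDer hBr htr
      | zero => exact h

end Derivation

end Products

section Skew

variable {V : Type} [AddCommGroup V] [Module ℂ V] {μ : ℤ → V →ₗ[ℂ] V →ₗ[ℂ] V}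
  {D : V →ₗ[ℂ] V}

lemma mul_iterate_D_left (hDer : IsDDeriv (μ · · ·) D) (a z : V) (i : ℕ) (m : ℤ) :
    μ m (D^[i] a) z = ((-1) ^ i * (Nat.factorial i : ℂ) * qbinom m i) • μ (m - i) a z := by
  induction i generalizing m with
  | zero => simp [qbinom_zero_right]
  | succ i ih =>
    rw [iterate_succ_apply', mul_D_left hDer, ih, smul_smul, ← neg_smul,
      show m - 1 - (i : ℤ) = m - ((i + 1 : ℕ) : ℤ) by push_cast; ring]
    congr 1
    have h := succ_mul_qbinom_succ m i
    push_cast [Nat.factorial_succ]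
    linear_combination -((-1) ^ (i + 1) * (Nat.factorial i : ℂ)) * h

lemma iterateSum_zero_left (u v w : V) (q r : ℤ) :
    iterateSum μ u v w 0 q r = μ q (μ r u v) w := by
  rw [iterateSum, binomialSum,
    finsum_eq_single _ 0 fun i hi => by rw [qbinom_zero_left hi, mul_zero, zero_smul]]
  simp [iterateFamily, qbinom_zero_right]

lemma iterateSum_swap (hJ : ∀ u v w, JacobiAt μ u v w) (x y z : V) (m n : ℤ) :
    iterateSum μ y x z m 0 n = (-1 : ℂ) ^ (n + 1) • μ m (μ n x y) z := by
  have hsq : (-1 : ℂ) ^ n * (-1) ^ n = 1 := by rw [← mul_zpow]; norm_num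
  rw [hJ y x z m 0 n, ← iterateSum_zero_left, hJ x y z 0 m n, zpow_add_one₀ (by norm_num)]
  linear_combination (norm := module) -(hsq • productSum μ y x z m 0 n)

lemma skew_coeff (n m : ℤ) (i : ℕ) :
    (-1 : ℂ) ^ (n + 1 + (i : ℤ)) * ((Nat.factorial i : ℂ))⁻¹ *
      ((-1) ^ i * (Nat.factorial i : ℂ) * qbinom m i) =
        (-1) ^ (n + 1) * (1 ^ i * qbinom m i) := by
  have hsq : (-1 : ℂ) ^ i * (-1) ^ i = 1 := by rw [← mul_pow]; norm_num
  have hfac : (Nat.factorial i : ℂ) ≠ 0 := Nat.cast_ne_zero.2 (Nat.factorial_ne_zero i)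
  rw [zpow_add₀ (by norm_num), zpow_natCast]
  calc _ = (-1 : ℂ) ^ (n + 1) * ((-1) ^ i * (-1) ^ i) *
        (((Nat.factorial i : ℂ))⁻¹ * Nat.factorial i) * qbinom m i := by ring
    _ = _ := by rw [hsq, inv_mul_cancel₀ hfac]; ring

theorem isSkew_of_injective (hDer : IsDDeriv (μ · · ·) D) (htr : IsTruncatedMul μ)
    (hJ : ∀ u v w, JacobiAt μ u v w) (hinj : ErtexInjectiveFun (μ · · ·)) :
    IsSkew (μ · · ·) D := by
  intro n x y
  beta_reduce
  set S := ∑ᶠ i : ℕ, ((-1 : ℂ) ^ (n + 1 + (i : ℤ)) * ((Nat.factorial i : ℂ))⁻¹) •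
    D^[i] (μ (n + i) y x)
  obtain ⟨N, hN⟩ := htr y x
  have hfin : HasFiniteSupport fun i : ℕ => ((-1 : ℂ) ^ (n + 1 + (i : ℤ)) *
      ((Nat.factorial i : ℂ))⁻¹) • D^[i] (μ (n + i) y x) :=
    hasFiniteSupport_of_forall_le (N - n) fun i hi => by
      rw [hN _ (by omega), iterate_map_zero, smul_zero]
  have hS : ∀ m z, μ m S z = μ m (μ n x y) z := fun m z => calc
    μ m S z = ∑ᶠ i : ℕ, (μ m).flip z (((-1 : ℂ) ^ (n + 1 + (i : ℤ)) *
        ((Nat.factorial i : ℂ))⁻¹) • D^[i] (μ (n + i) y x)) :=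
      ((μ m).flip z).toAddMonoidHom.map_finsum hfin
    _ = ∑ᶠ i : ℕ, (-1 : ℂ) ^ (n + 1) •
        ((1 ^ i * qbinom m i : ℂ) • iterateFamily μ y x z (m + 0 - i) (n + i)) :=
      finsum_congr fun i => by
        rw [LinearMap.flip_apply, map_smul, LinearMap.smul_apply, mul_iterate_D_left hDer,
          smul_smul, smul_smul, skew_coeff, add_zero]
        rfl
    _ = (-1 : ℂ) ^ (n + 1) • iterateSum μ y x z m 0 n := by rw [← smul_finsum]; rfl
    _ = μ m (μ n x y) z := by
      rw [iterateSum_swap hJ, smul_smul, ← mul_zpow]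
      norm_num
  exact sub_eq_zero.1 (hinj _ fun m z => by
    simp only [map_sub, LinearMap.sub_apply, hS, sub_self])

end Skew

section Quotient

variable {V : Type} [AddCommGroup V] [Module ℂ V] {μ : ℤ → V →ₗ[ℂ] V →ₗ[ℂ] V}
  {D : V →ₗ[ℂ] V}
  {I : Submodule ℂ V}

variable (μ I) in
def IsIdeal : Prop := ∀ n a, ∀ w ∈ I, μ n w a ∈ I ∧ μ n a w ∈ I

def quotientMul (hI : IsIdeal μ I) (n : ℤ) : V ⧸ I →ₗ[ℂ] V ⧸ I →ₗ[ℂ] V ⧸ I :=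
  ((μ n).compr₂ I.mkQ).liftQ₂ I I
    (fun w hw => LinearMap.ext fun a => (Submodule.Quotient.mk_eq_zero I).2 (hI n a w hw).1)
    (fun w hw => LinearMap.ext fun a => (Submodule.Quotient.mk_eq_zero I).2 (hI n a w hw).2)

lemma isMulHomFun_mkQ (hI : IsIdeal μ I) :
    IsMulHomFun (μ · · ·) (quotientMul hI · · ·) I.mkQ :=
  fun _ _ _ => rfl

lemma IsTruncatedMul.quotient (htr : IsTruncatedMul μ) (hI : IsIdeal μ I) :
    IsTruncatedMul (quotientMul hI) := by
  intro x y
  obtain ⟨a, rfl⟩ := Submodule.mkQ_surjective I x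
  obtain ⟨b, rfl⟩ := Submodule.mkQ_surjective I y
  obtain ⟨N, hN⟩ := htr a b
  exact ⟨N, fun n hn => show I.mkQ (μ n a b) = 0 by rw [hN n hn, map_zero]⟩

lemma jacobiAt_quotient (htr : IsTruncatedMul μ) (hI : IsIdeal μ I)
    (hJ : ∀ u v w, JacobiAt μ u v w) (x y z : V ⧸ I) : JacobiAt (quotientMul hI) x y z := by
  obtain ⟨a, rfl⟩ := Submodule.mkQ_surjective I x
  obtain ⟨b, rfl⟩ := Submodule.mkQ_surjective I y
  obtain ⟨c, rfl⟩ := Submodule.mkQ_surjective I z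
  exact (hJ a b c).map htr (isMulHomFun_mkQ hI)

def quotientD (hD : ∀ w ∈ I, D w ∈ I) : V ⧸ I →ₗ[ℂ] V ⧸ I := I.mapQ I D hD

lemma quotientD_iterate_mkQ (hD : ∀ w ∈ I, D w ∈ I) (j : ℕ) (a : V) :
    (quotientD hD)^[j] (I.mkQ a) = I.mkQ (D^[j] a) := by
  induction j with
  | zero => rfl
  | succ j ih => rw [iterate_succ_apply', ih, iterate_succ_apply']; rfl

lemma isDDeriv_quotient (hDer : IsDDeriv (μ · · ·) D) (hI : IsIdeal μ I)
    (hD : ∀ w ∈ I, D w ∈ I) :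
    IsDDeriv (quotientMul hI · · ·) (quotientD hD) := by
  intro n x y
  obtain ⟨a, rfl⟩ := Submodule.mkQ_surjective I x
  obtain ⟨b, rfl⟩ := Submodule.mkQ_surjective I y
  exact (congrArg I.mkQ (hDer n a b)).trans (map_smul _ _ _)

lemma isDBracket_quotient (hBr : IsDBracket (μ · · ·) D) (hI : IsIdeal μ I)
    (hD : ∀ w ∈ I, D w ∈ I) : IsDBracket (quotientMul hI · · ·) (quotientD hD) := by
  intro n x y
  obtain ⟨a, rfl⟩ := Submodule.mkQ_surjective I x
  obtain ⟨b, rfl⟩ := Submodule.mkQ_surjective I y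
  exact (congrArg I.mkQ (hBr n a b)).trans (map_add _ _ _)

end Quotient

section Annihilator

variable {V : Type} [AddCommGroup V] [Module ℂ V] (μ : ℤ → V →ₗ[ℂ] V →ₗ[ℂ] V)
  (S : Submodule ℂ V)

def leftAnnihilator : Submodule ℂ V where
  carrier := {w | ∀ n, ∀ s ∈ S, μ n w s = 0}
  add_mem' ha hb n s hs := by simp [ha n s hs, hb n s hs]
  zero_mem' n s _ := by simp
  smul_mem' c w hw n s hs := by simp [hw n s hs]

variable {μ S}

lemma isIdeal_leftAnnihilator (hJ : ∀ u v w, JacobiAt μ u v w)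
    (hS : ∀ n a, ∀ s ∈ S, μ n a s ∈ S) : IsIdeal μ (leftAnnihilator μ S) := by
  intro n a w hw
  -- Jacobi at `p = 0` writes both products as sums of terms `w_k (a_l s)` and `a_k (w_l s)`
  have h₁ : ∀ s ∈ S, ∀ k l, productFamily μ w a s k l = 0 := fun s hs k l =>
    hw k _ (hS l a s hs)
  have h₂ : ∀ s ∈ S, ∀ k l, productFamily μ a w s k l = 0 := fun s hs k l => by
    simp [productFamily, hw l s hs]
  constructor <;> intro m s hs <;>
    simp [← iterateSum_zero_left, hJ _ _ s 0 m n, productSum, binomialSum_eq_zero (h₁ s hs),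
      binomialSum_eq_zero (h₂ s hs)]

lemma D_mem_leftAnnihilator {D : V →ₗ[ℂ] V} (hDer : IsDDeriv (μ · · ·) D) {w : V}
    (hw : w ∈ leftAnnihilator μ S) : D w ∈ leftAnnihilator μ S := fun n s hs => by
  simp [mul_D_left hDer, hw (n - 1) s hs]

lemma ertexInjective_quotient_leftAnnihilator (hS : ∀ n a, ∀ s ∈ S, μ n a s ∈ S)
    (hSinj : ∀ s ∈ S, s ∈ leftAnnihilator μ S → s = 0)
    (hI : IsIdeal μ (leftAnnihilator μ S)) :
    ErtexInjectiveFun (quotientMul hI · · ·) := by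
  intro x hx
  obtain ⟨w, rfl⟩ := Submodule.mkQ_surjective _ x
  exact (Submodule.Quotient.mk_eq_zero _).2 fun n s hs => hSinj _ (hS n w s hs)
    ((Submodule.Quotient.mk_eq_zero _).1 (hx n (Submodule.Quotient.mk s)))

end Annihilator


section DPoly

variable (E : ErtexAlgebra)

def mulₗ (n : ℤ) : E.carrier →ₗ[ℂ] E.carrier →ₗ[ℂ] E.carrier :=
  LinearMap.mk₂ ℂ (E.mul n) (E.isErtex.add_left n) (E.isErtex.smul_left n)
    (E.isErtex.add_right n) (E.isErtex.smul_right n)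

/-- Formal `D`-polynomials over `E`: `single j u` stands for `Dʲ u`. -/
abbrev DPoly := ℕ →₀ E.carrier

def shift : DPoly E →ₗ[ℂ] DPoly E := Finsupp.lmapDomain E.carrier ℂ (· + 1)

/-- `u_n (Dᵏ v)`, expanded by the rule `u_n (D x) = D (u_n x) + n u_{n-1} x`. -/
def basicProduct : ℤ → ℕ → E.carrier →ₗ[ℂ] E.carrier →ₗ[ℂ] DPoly E
  | n, 0 => (mulₗ E n).compr₂ (Finsupp.lsingle 0)
  | n, k + 1 => (basicProduct n k).compr₂ (shift E) + (n : ℂ) • basicProduct (n - 1) k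

/-- `(Dʲ u)_n (Dᵏ v)`, expanded by the rule `(D x)_n = -n x_{n-1}`. -/
def monomialProduct : ℤ → ℕ → ℕ → E.carrier →ₗ[ℂ] E.carrier →ₗ[ℂ] DPoly E
  | n, 0, k => basicProduct E n k
  | n, j + 1, k => (-(n : ℂ)) • monomialProduct (n - 1) j k

def constants : Submodule ℂ (DPoly E) :=
  LinearMap.range (Finsupp.lsingle (R := ℂ) (M := E.carrier) 0)

def polyMul (n : ℤ) : DPoly E →ₗ[ℂ] DPoly E →ₗ[ℂ] DPoly E :=
  Finsupp.lsum ℂ fun j => (Finsupp.lsum ℂ fun k => (monomialProduct E n j k).flip).flip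

variable {E}

lemma isTruncatedMul_mulₗ : IsTruncatedMul (mulₗ E) := E.isErtex.trunc

lemma polyMul_single (n : ℤ) (j k : ℕ) (u v : E.carrier) :
    polyMul E n (Finsupp.single j u) (Finsupp.single k v) = monomialProduct E n j k u v := by
  simp [polyMul]

lemma polyMul_single_zero (n : ℤ) (u v : E.carrier) :
    polyMul E n (Finsupp.single 0 u) (Finsupp.single 0 v) = Finsupp.single 0 (E.mul n u v) :=
  polyMul_single n 0 0 u v

lemma shift_single (j : ℕ) (u : E.carrier) :
    shift E (Finsupp.single j u) = Finsupp.single (j + 1) u :=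
  Finsupp.mapDomain_single

lemma iterate_shift_single (j : ℕ) (u : E.carrier) :
    (shift E)^[j] (Finsupp.single 0 u) = Finsupp.single j u := by
  induction j with
  | zero => rfl
  | succ j ih => rw [iterate_succ_apply', ih, shift_single]

lemma monomialProduct_succ_right (n : ℤ) (j k : ℕ) (u v : E.carrier) :
    monomialProduct E n j (k + 1) u v =
      shift E (monomialProduct E n j k u v) + (n : ℂ) • monomialProduct E (n - 1) j k u v := by
  induction j generalizing n with
  | zero => rfl
  | succ j ih =>
    simp only [monomialProduct, LinearMap.smul_apply, ih, map_smul]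
    module

lemma polyMul_shift_left (n : ℤ) (f g : DPoly E) :
    polyMul E n (shift E f) g = (-(n : ℂ)) • polyMul E (n - 1) f g := by
  have h : (polyMul E n).comp (shift E) = (-(n : ℂ)) • polyMul E (n - 1) := by
    ext j u k v
    simp [polyMul_single, shift_single, monomialProduct]
  exact LinearMap.congr_fun₂ h f g

lemma polyMul_shift_right (n : ℤ) (f g : DPoly E) :
    polyMul E n f (shift E g) =
      shift E (polyMul E n f g) + (n : ℂ) • polyMul E (n - 1) f g := by
  have h : (polyMul E n).compl₂ (shift E) =
      (polyMul E n).compr₂ (shift E) + (n : ℂ) • polyMul E (n - 1) := by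
    ext j u k v
    simp [polyMul_single, shift_single, monomialProduct_succ_right]
  exact LinearMap.congr_fun₂ h f g

lemma isDDeriv_polyMul : IsDDeriv (polyMul E · · ·) (shift E) := fun n f g => by
  simp only [polyMul_shift_left, Int.cast_neg]

lemma isDBracket_polyMul : IsDBracket (polyMul E · · ·) (shift E) := fun n f g => by
  simp only [polyMul_shift_left, polyMul_shift_right]
  module

lemma monomialProduct_eq_zero {u v : E.carrier} {N : ℤ} (hN : ∀ n, N ≤ n → E.mul n u v = 0)
    (j k : ℕ) (n : ℤ) (hn : N + j + k ≤ n) : monomialProduct E n j k u v = 0 := by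
  induction j generalizing n with
  | zero =>
    induction k generalizing n with
    | zero => simp [monomialProduct, basicProduct, mulₗ, hN n (by omega)]
    | succ k ih =>
      have h₁ := ih n (by omega)
      have h₂ := ih (n - 1) (by omega)
      simp only [monomialProduct] at h₁ h₂ ⊢
      simp [basicProduct, h₁, h₂]
  | succ j ih => simp [monomialProduct, ih (n - 1) (by omega)]

lemma isTruncatedMul_polyMul : IsTruncatedMul (polyMul E) := by
  intro f g
  induction f using Finsupp.induction_linear with
  | zero => exact ⟨0, fun n _ => by simp⟩
  | add f f' hf hf' => simpa only [map_add, LinearMap.add_apply] using eventually_zero_add hf hf'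
  | single j u =>
    induction g using Finsupp.induction_linear with
    | zero => exact ⟨0, fun n _ => by simp⟩
    | add g g' hg hg' => simpa only [map_add] using eventually_zero_add hg hg'
    | single k v =>
      obtain ⟨N, hN⟩ := E.isErtex.trunc u v
      exact ⟨N + j + k, fun n hn => by
        rw [polyMul_single]
        exact monomialProduct_eq_zero hN j k n hn⟩

lemma isMulHomFun_lsingle :
    IsMulHomFun (mulₗ E · · ·) (polyMul E · · ·) (Finsupp.lsingle 0) :=
  fun n u v => (polyMul_single_zero n u v).symm

lemma polyMul_mem_constants (n : ℤ) (f : DPoly E) {s : DPoly E} (hs : s ∈ constants E) :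
    polyMul E n f s ∈ constants E := by
  obtain ⟨v, rfl⟩ := hs
  have hmono : ∀ j n u, monomialProduct E n j 0 u v ∈ constants E := by
    intro j
    induction j with
    | zero => exact fun n u => ⟨E.mul n u v, rfl⟩
    | succ j ih => exact fun n u => Submodule.smul_mem _ _ (ih _ u)
  induction f using Finsupp.induction_linear with
  | zero => simp
  | add f f' hf hf' => rw [map_add, LinearMap.add_apply]; exact add_mem hf hf'
  | single j u => rw [Finsupp.lsingle_apply, polyMul_single]; exact hmono j n u

lemma jacobiAt_polyMul (f g h : DPoly E) : JacobiAt (polyMul E) f g h := by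
  have htr := isTruncatedMul_polyMul (E := E)
  have hsingle : ∀ j u k v l w, JacobiAt (polyMul E) (Finsupp.single j u) (Finsupp.single k v)
      (Finsupp.single l w) := fun j u k v l w => by
    simpa only [Finsupp.lsingle_apply, iterate_shift_single] using
      ((IsErtex.jacobiAt (μ := mulₗ E) E.isErtex u v w).map isTruncatedMul_mulₗ
        isMulHomFun_lsingle).iterate isDDeriv_polyMul isDBracket_polyMul htr j k l
  have h₁ : ∀ f k v l w, JacobiAt (polyMul E) f (Finsupp.single k v) (Finsupp.single l w) := by
    intro f k v l w
    induction f using Finsupp.induction_linear with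
    | zero => simpa using hsingle 0 0 k v l w
    | add f f' hf hf' => exact hf.add_left htr hf'
    | single j u => exact hsingle j u k v l w
  have h₂ : ∀ f g l w, JacobiAt (polyMul E) f g (Finsupp.single l w) := by
    intro f g l w
    induction g using Finsupp.induction_linear with
    | zero => simpa using h₁ f 0 0 l w
    | add g g' hg hg' => exact hg.add_mid htr hg'
    | single k v => exact h₁ f k v l w
  induction h using Finsupp.induction_linear with
  | zero => simpa using h₂ f g 0 0
  | add h h' hh hh' => exact hh.add_right htr hh'
  | single l w => exact h₂ f g l w

variable (E) in
def polyAnnihilator : Submodule ℂ (DPoly E) :=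
  leftAnnihilator (polyMul E) (constants E)

lemma isIdeal_polyAnnihilator : IsIdeal (polyMul E) (polyAnnihilator E) :=
  isIdeal_leftAnnihilator jacobiAt_polyMul fun n f _ => polyMul_mem_constants n f

lemma shift_mem_polyAnnihilator : ∀ w ∈ polyAnnihilator E, shift E w ∈ polyAnnihilator E :=
  fun _ => D_mem_leftAnnihilator isDDeriv_polyMul

lemma eq_zero_of_single_mem_polyAnnihilator (hE : ErtexInjectiveFun E.mul) {u : E.carrier}
    (hu : Finsupp.single 0 u ∈ polyAnnihilator E) : u = 0 :=
  hE u fun n v => Finsupp.single_eq_zero.1 <| by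
    rw [← polyMul_single_zero]
    exact hu n _ ⟨v, rfl⟩

lemma ertexInjective_quotient_polyAnnihilator (hE : ErtexInjectiveFun E.mul) :
    ErtexInjectiveFun (quotientMul (isIdeal_polyAnnihilator (E := E)) · · ·) :=
  ertexInjective_quotient_leftAnnihilator (fun n f _ => polyMul_mem_constants n f)
    (fun _ ⟨u, hu⟩ hs => by
      rw [← hu] at hs ⊢
      rw [eq_zero_of_single_mem_polyAnnihilator hE hs, map_zero])
    _

end DPoly

def dClosure (E : ErtexAlgebra) (hE : ErtexInjectiveFun E.mul) : DErtexAlgebra where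
  carrier := DPoly E ⧸ polyAnnihilator E
  mul n x y := quotientMul isIdeal_polyAnnihilator n x y
  isErtex := isErtex_of_jacobiAt (isTruncatedMul_polyMul.quotient _)
    (jacobiAt_quotient isTruncatedMul_polyMul _ jacobiAt_polyMul)
  D := quotientD shift_mem_polyAnnihilator
  isD := ⟨isDDeriv_quotient isDDeriv_polyMul _ _, isDBracket_quotient isDBracket_polyMul _ _,
    isSkew_of_injective (isDDeriv_quotient isDDeriv_polyMul _ _)
      (isTruncatedMul_polyMul.quotient _)
      (jacobiAt_quotient isTruncatedMul_polyMul _ jacobiAt_polyMul)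
      (ertexInjective_quotient_polyAnnihilator hE)⟩

def embedding (E : ErtexAlgebra) : E.carrier →ₗ[ℂ] DPoly E ⧸ polyAnnihilator E :=
  (polyAnnihilator E).mkQ ∘ₗ Finsupp.lsingle 0

variable {E : ErtexAlgebra}

lemma isMulHomFun_embedding (hE : ErtexInjectiveFun E.mul) :
    IsMulHomFun E.mul (dClosure E hE).mul (embedding E) := fun n u v =>
  congrArg (polyAnnihilator E).mkQ (polyMul_single_zero n u v).symm

lemma embedding_injective (hE : ErtexInjectiveFun E.mul) : Injective (embedding E) :=
  (injective_iff_map_eq_zero _).2 fun _ hu =>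
    eq_zero_of_single_mem_polyAnnihilator hE ((Submodule.Quotient.mk_eq_zero _).1 hu)

lemma dSpan_embedding (hE : ErtexInjectiveFun E.mul) :
    DSpan E (dClosure E hE) (embedding E) = ⊤ := by
  refine Submodule.eq_top_iff'.2 fun x => ?_
  obtain ⟨f, rfl⟩ := Submodule.mkQ_surjective _ x
  induction f using Finsupp.induction_linear with
  | zero => exact zero_mem _
  | add f g hf hg => rw [map_add]; exact add_mem hf hg
  | single j u =>
    refine Submodule.subset_span ⟨j, u, ?_⟩
    change _ = (quotientD shift_mem_polyAnnihilator)^[j]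
      ((polyAnnihilator E).mkQ (Finsupp.single 0 u))
    rw [quotientD_iterate_mkQ, iterate_shift_single]

end Ertex

/-- every injective ertex algebra `E` embeds into an injective `D`-ertex
algebra `E′` which is the linear span of `{Dⁿ i(u) : n ≥ 0, u ∈ E}`. -/
theorem stmt_9 (E : ErtexAlgebra) (hE : ErtexInjectiveFun E.mul) :
    ∃ (E' : DErtexAlgebra) (i : E.carrier →ₗ[ℂ] E'.carrier),
      ErtexInjectiveFun E'.mul ∧ IsMulHomFun E.mul E'.mul i ∧ Function.Injective i ∧
      DSpan E E' i = ⊤ :=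
  ⟨Ertex.dClosure E hE, Ertex.embedding E, Ertex.ertexInjective_quotient_polyAnnihilator hE,
    Ertex.isMulHomFun_embedding hE, Ertex.embedding_injective hE, Ertex.dSpan_embedding hE⟩

end
end

section
/- Let (E,Y_E,D) be a D-ertex algebra, let V = E ⊕ ℂ be the vertex algebra with products (u,a)_n (v,b) = (u_n v + b·c_n(u) + a·δ_{n,−1} v, a·b·δ_{n,−1}) and vacuum (0,1), and let i : E → V be i(u) = (u,0). Suppose F is a vertex algebra and j : E → F is an injective D-ertex algebra homomorphism (F regarded as a D-ertex algebra via 𝒟_F(v) = v_{−2} 1_F) such that for every vertex algebra W and every D-ertex algebra homomorphism ψ : E → W (W via 𝒟_W(v) = v_{−2} 1_W) there exists a unique vertex algebra homomorphism φ : F → W with φ ∘ j = ψ. Then there exists a unique vertex algebra isomorphism α : V → F such that α ∘ i = j. -/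
noncomputable section

/-!
The map `(u, a) ↦ j u + a 1` is forced by `α ∘ i = j` and `α 1 = 1`. It is a vertex algebra
homomorphism because `j (cₙ u) = (j u)ₙ 1`, which follows from `𝒟ᵏ x = k! x₋ₖ₋₁ 1` in any vertex
algebra. It is injective because the universal property, applied to the zero map into the
one-dimensional vertex algebra `ℂ`, gives a functional on `F` that kills `j E` and sends `1` to `1`.
It is surjective because its image is a vertex subalgebra containing `j E`, and the universal
property leaves no room for a proper one.
-/

theorem qbinom_eq_choose (m : ℤ) (i : ℕ) : qbinom m i = ((Ring.choose m i : ℤ) : ℚ) := by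
  rw [← eq_intCast (Int.castRingHom ℚ), Ring.map_choose, Ring.choose_eq_smul, qbinom,
    div_eq_inv_mul, smul_eq_mul, ← Polynomial.aeval_eq_smeval, Polynomial.aeval_def,
    ← Polynomial.eval_map, descPochhammer_map, descPochhammer_eval_eq_prod_range]
  rfl

theorem qbinom_natCast (n k : ℕ) : qbinom n k = n.choose k := by
  rw [qbinom_eq_choose, Ring.choose_natCast]
  norm_cast

theorem qbinom_zero_left_s13 (k : ℕ) : qbinom 0 k = if k = 0 then 1 else 0 := by
  rw [qbinom_eq_choose, Ring.choose_zero_ite]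
  split_ifs <;> simp

theorem qbinom_one_right (m : ℤ) : qbinom m 1 = m := by
  simp [qbinom]

theorem qbinom_sub_sub_one (m : ℤ) (k : ℕ) : qbinom (k - m - 1) k = (-1) ^ k * qbinom m k := by
  rw [qbinom_eq_choose, qbinom_eq_choose, show (k : ℤ) - m - 1 = -(m - k + 1) by ring,
    Ring.choose_neg, show m - k + 1 + k - 1 = m by ring, Units.smul_def, smul_eq_mul,
    Int.coe_negOnePow_natCast]
  push_cast
  rfl

theorem neg_one_pow_mul_self {R : Type*} [Monoid R] [HasDistribNeg R] (n : ℕ) :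
    (-1 : R) ^ n * (-1) ^ n = 1 := by
  rw [← pow_add, ← two_mul, pow_mul, neg_one_sq, one_pow]

theorem qbinom_neg_one_sub_natCast (a c : ℕ) :
    qbinom (-1 - a) c = (-1) ^ c * ((a + c).choose a : ℚ) := by
  rw [show (-1 - a : ℤ) = c - (a + c : ℕ) - 1 by push_cast; ring, qbinom_sub_sub_one,
    qbinom_natCast, Nat.choose_symm_add]

/- The three sides are the coefficients of `u v w` in the three sums of the Jacobi identity of
`trivialMul`, where only the indices `i = -1-r`, `-1-q`, `-1-p` contribute. -/
theorem qbinom_delta_identity {p q r : ℤ} (h : p + q + r = -2) :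
    (if 0 ≤ -1 - r then qbinom p (-1 - r).toNat else 0) =
      (if 0 ≤ -1 - q then (-1) ^ (-1 - q).toNat * qbinom r (-1 - q).toNat else 0) -
        (if 0 ≤ -1 - p then (-1) ^ r * ((-1) ^ (-1 - p).toNat * qbinom r (-1 - p).toNat)
          else 0) := by
  rcases le_or_gt 0 p with hp | hp <;> rcases le_or_gt 0 q with hq | hq
  · lift p to ℕ using hp
    lift q to ℕ using hq
    rw [if_pos (by omega), if_neg (by omega), if_neg (by omega),
      show (-1 - r).toNat = p + q + 1 by omega, qbinom_natCast,
      Nat.choose_eq_zero_of_lt (by omega)]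
    simp
  · lift p to ℕ using hp
    obtain ⟨b, rfl⟩ : ∃ b : ℕ, q = -1 - b := ⟨(-1 - q).toNat, by omega⟩
    obtain rfl : r = b - p - 1 := by omega
    rw [if_pos (show (0 : ℤ) ≤ -1 - (-1 - b) by omega), if_neg (show ¬(0 : ℤ) ≤ -1 - p by omega),
      sub_zero, show (-1 - (-1 - b : ℤ)).toNat = b by omega,
      ← qbinom_sub_sub_one, show (b - (b - p - 1 : ℤ) - 1) = p by ring]
    split_ifs
    · rw [show (-1 - (b - p - 1 : ℤ)).toNat = p - b by omega, qbinom_natCast, qbinom_natCast,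
        Nat.choose_symm (by omega)]
    · rw [qbinom_natCast, Nat.choose_eq_zero_of_lt (by omega), Nat.cast_zero]
  · obtain ⟨a, rfl⟩ : ∃ a : ℕ, p = -1 - a := ⟨(-1 - p).toNat, by omega⟩
    lift q to ℕ using hq
    obtain rfl : r = a - q - 1 := by omega
    rw [if_neg (show ¬(0 : ℤ) ≤ -1 - q by omega), if_pos (show (0 : ℤ) ≤ -1 - (-1 - a) by omega),
      zero_sub, show (-1 - (-1 - a : ℤ)).toNat = a by omega,
      ← qbinom_sub_sub_one, show (a - (a - q - 1 : ℤ) - 1) = q by ring]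
    split_ifs
    · obtain ⟨c, rfl⟩ : ∃ c : ℕ, q = a + c := ⟨q - a, by omega⟩
      rw [show (-1 - (a - (a + c : ℕ) - 1 : ℤ)).toNat = c by omega, qbinom_neg_one_sub_natCast,
        qbinom_natCast, show ((a : ℤ) - (a + c : ℕ) - 1) = -((c + 1 : ℕ) : ℤ) by push_cast; ring,
        zpow_neg, zpow_natCast, pow_succ]
      field_simp
      rw [sq, neg_one_pow_mul_self, one_mul]
    · rw [qbinom_natCast, Nat.choose_eq_zero_of_lt (by omega), Nat.cast_zero]
      simp
  · obtain ⟨a, rfl⟩ : ∃ a : ℕ, p = -1 - a := ⟨(-1 - p).toNat, by omega⟩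
    obtain ⟨b, rfl⟩ : ∃ b : ℕ, q = -1 - b := ⟨(-1 - q).toNat, by omega⟩
    obtain rfl : r = ((a + b : ℕ) : ℤ) := by push_cast; omega
    rw [if_neg (by omega), if_pos (by omega), if_pos (by omega),
      show (-1 - (-1 - a : ℤ)).toNat = a by omega, show (-1 - (-1 - b : ℤ)).toNat = b by omega,
      qbinom_natCast, qbinom_natCast, Nat.choose_symm_add, zpow_natCast, pow_add]
    linear_combination ((a + b).choose b * (-1) ^ b : ℚ) * neg_one_pow_mul_self (R := ℚ) a

theorem finsum_ite_natCast_eq {M : Type*} [AddCommMonoid M] (t : ℤ) (f : ℕ → M) :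
    (∑ᶠ i : ℕ, if (i : ℤ) = t then f i else 0) = if 0 ≤ t then f t.toNat else 0 := by
  split_ifs with ht
  · rw [finsum_eq_single _ t.toNat fun i hi => if_neg (by omega), if_pos (by omega)]
  · exact finsum_eq_zero_of_forall_eq_zero fun i => if_neg (by omega)

theorem hasFiniteSupport_ite_natCast_eq {M : Type*} [AddCommMonoid M] (t : ℤ) (f : ℕ → M) :
    Function.HasFiniteSupport fun i : ℕ => if (i : ℤ) = t then f i else 0 :=
  (Set.finite_singleton t.toNat).subset fun i hi => by
    by_contra h
    exact hi (if_neg (by simp at h; omega))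

def trivialMul (n : ℤ) (a b : ℂ) : ℂ := if n = -1 then a * b else 0

theorem trivialMul_jacobi (u v w : ℂ) (p q r : ℤ) :
    (∑ᶠ i : ℕ, (qbinom p i : ℂ) • trivialMul (p + q - i) (trivialMul (r + i) u v) w) =
    ∑ᶠ i : ℕ, ((-1 : ℂ) ^ i * (qbinom r i : ℂ)) •
      (trivialMul (p + r - i) u (trivialMul (q + i) v w)
        - ((-1 : ℂ) ^ r) • trivialMul (q + r - i) v (trivialMul (p + i) u w)) := by
  simp only [trivialMul]
  by_cases hs : p + q + r = -2
  · have hL : ∀ i : ℕ, (qbinom p i : ℂ) •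
        (if p + q - i = -1 then (if r + i = -1 then u * v else 0) * w else 0) =
        if (i : ℤ) = -1 - r then (qbinom p i : ℂ) * (u * v * w) else 0 := by
      intro i; split_ifs <;> first | omega | simp [mul_assoc]
    have hR : ∀ i : ℕ, ((-1 : ℂ) ^ i * (qbinom r i : ℂ)) •
        ((if p + r - i = -1 then u * (if q + i = -1 then v * w else 0) else 0) -
          (-1 : ℂ) ^ r • (if q + r - i = -1 then v * (if p + i = -1 then u * w else 0) else 0)) =
        (if (i : ℤ) = -1 - q then (-1) ^ i * (qbinom r i : ℂ) * (u * v * w) else 0) -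
          (if (i : ℤ) = -1 - p then (-1) ^ r * ((-1) ^ i * (qbinom r i : ℂ)) * (u * v * w)
            else 0) := by
      intro i; split_ifs <;> first | omega | simp only [smul_eq_mul]; ring
    rw [finsum_congr hL, finsum_congr hR,
      finsum_sub_distrib (hasFiniteSupport_ite_natCast_eq _ _)
        (hasFiniteSupport_ite_natCast_eq _ _),
      finsum_ite_natCast_eq, finsum_ite_natCast_eq, finsum_ite_natCast_eq]
    have := congrArg (fun x : ℚ => (x : ℂ) * (u * v * w)) (qbinom_delta_identity hs)
    convert this using 1 <;> split_ifs <;> push_cast <;> ring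
  · have hL : ∀ i : ℕ, (qbinom p i : ℂ) •
        (if p + q - i = -1 then (if r + i = -1 then u * v else 0) * w else 0) = 0 := by
      intro i; split_ifs <;> first | omega | simp
    have hR : ∀ i : ℕ, ((-1 : ℂ) ^ i * (qbinom r i : ℂ)) •
        ((if p + r - i = -1 then u * (if q + i = -1 then v * w else 0) else 0) -
          (-1 : ℂ) ^ r • (if q + r - i = -1 then v * (if p + i = -1 then u * w else 0) else 0)) =
        0 := by
      intro i; split_ifs <;> first | omega | simp
    rw [finsum_congr hL, finsum_congr hR]

def trivialVertexAlgebra : VertexAlgebra where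
  carrier := ℂ
  mul := trivialMul
  isErtex :=
    { add_left := fun n u u' v => by unfold trivialMul; split_ifs <;> ring
      smul_left := fun n c u v => by unfold trivialMul; split_ifs <;> simp [mul_assoc]
      add_right := fun n u v v' => by unfold trivialMul; split_ifs <;> ring
      smul_right := fun n c u v => by unfold trivialMul; split_ifs <;> simp [mul_left_comm]
      trunc := fun u v => ⟨0, fun n hn => if_neg (by omega)⟩
      jacobi := trivialMul_jacobi }
  vac := 1
  isVacuum :=
    { vac_minus_one := fun v => by simp [trivialMul]
      vac_ne := fun n hn v => if_neg hn
      create_minus_one := fun u => by simp [trivialMul]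
      create_nonneg := fun n hn u => if_neg (by omega) }

theorem IsErtex.mul_zero {V : Type} [AddCommGroup V] [Module ℂ V] {mul : ℤ → V → V → V}
    (h : IsErtex mul) (n : ℤ) (u : V) : mul n u 0 = 0 := by
  simpa using h.smul_right n 0 u 0

namespace VertexAlgebra

variable (V : VertexAlgebra)

/- The Jacobi identity for `(x, 1, 1)` with `(p, q, r) = (0, -2, m)`: only `i = 0` survives on the
left and only `i = 1` on the right, by the vacuum and creation properties. -/
theorem mul_neg_two_mul_vac (x : V.carrier) (m : ℤ) :
    V.mul (-2) (V.mul m x V.vac) V.vac = ((-m : ℤ) : ℂ) • V.mul (m - 1) x V.vac := by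
  have hJ := V.isErtex.jacobi x V.vac V.vac 0 (-2) m
  rw [finsum_eq_single _ 0 fun i hi => by simp [qbinom_zero_left_s13, hi],
    finsum_eq_single _ 1 fun i hi => by
      rw [V.isVacuum.vac_ne _ (by omega), V.isErtex.mul_zero,
        V.isVacuum.create_nonneg _ (by omega), V.isErtex.mul_zero]
      simp] at hJ
  norm_num [qbinom_zero_left_s13, qbinom_one_right, V.isVacuum.vac_minus_one,
    V.isVacuum.create_nonneg, V.isErtex.mul_zero] at hJ
  rw [hJ, Int.cast_neg, neg_smul]

theorem iterate_mul_neg_two_vac (x : V.carrier) (k : ℕ) :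
    (fun y => V.mul (-2) y V.vac)^[k] x = (k.factorial : ℂ) • V.mul (-k - 1) x V.vac := by
  induction k with
  | zero => simp [V.isVacuum.create_minus_one]
  | succ k ih =>
    rw [Function.iterate_succ_apply', ih, V.isErtex.smul_left, mul_neg_two_mul_vac, smul_smul,
      show -(-(k : ℤ) - 1) = k + 1 by ring, show -(k : ℤ) - 1 - 1 = -↑(k + 1) - 1 by push_cast; ring]
    push_cast [Nat.factorial_succ]
    ring_nf

def ofSubmodule (S : Submodule ℂ V.carrier)
    (hmul : ∀ (n : ℤ) (x y : V.carrier), x ∈ S → y ∈ S → V.mul n x y ∈ S)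
    (hvac : V.vac ∈ S) : VertexAlgebra where
  carrier := S
  mul n x y := ⟨V.mul n x y, hmul n x y x.2 y.2⟩
  isErtex :=
    { add_left := fun n u u' v => Subtype.ext (V.isErtex.add_left n u u' v)
      smul_left := fun n c u v => Subtype.ext (V.isErtex.smul_left n c u v)
      add_right := fun n u v v' => Subtype.ext (V.isErtex.add_right n u v v')
      smul_right := fun n c u v => Subtype.ext (V.isErtex.smul_right n c u v)
      trunc := fun u v => (V.isErtex.trunc u v).imp fun _ hN n hn => Subtype.ext (hN n hn)
      jacobi := fun u v w p q r => Subtype.ext <| by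
        have h := S.subtype.toAddMonoidHom.map_finsum_of_injective (α := ℕ) Subtype.val_injective
        simp only [LinearMap.toAddMonoidHom_coe, Submodule.subtype_apply] at h
        rw [h, h]
        exact V.isErtex.jacobi u v w p q r }
  vac := ⟨V.vac, hvac⟩
  isVacuum :=
    { vac_minus_one := fun v => Subtype.ext (V.isVacuum.vac_minus_one v)
      vac_ne := fun n hn v => Subtype.ext (V.isVacuum.vac_ne n hn v)
      create_minus_one := fun u => Subtype.ext (V.isVacuum.create_minus_one u)
      create_nonneg := fun n hn u => Subtype.ext (V.isVacuum.create_nonneg n hn u) }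

end VertexAlgebra

def IsUniversalVertexHom (E : DErtexAlgebra) (F : VertexAlgebra)
    (j : E.carrier →ₗ[ℂ] F.carrier) : Prop :=
  ∀ (W : VertexAlgebra) (ψ : E.carrier →ₗ[ℂ] W.carrier),
    IsMulHomFun E.mul W.mul ψ →
    (∀ v : E.carrier, ψ (E.D v) = W.mul (-2) (ψ v) W.vac) →
    ∃! φ : F.carrier →ₗ[ℂ] W.carrier,
      (IsMulHomFun F.mul W.mul φ ∧ φ F.vac = W.vac) ∧ ∀ u : E.carrier, φ (j u) = ψ u

section UniversalVertexHom

variable {E : DErtexAlgebra} {F : VertexAlgebra} {j : E.carrier →ₗ[ℂ] F.carrier}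

theorem map_iterate_D (hjD : ∀ v : E.carrier, j (E.D v) = F.mul (-2) (j v) F.vac)
    (k : ℕ) (u : E.carrier) : j ((⇑E.D)^[k] u) = (fun y => F.mul (-2) y F.vac)^[k] (j u) := by
  induction k with
  | zero => rfl
  | succ k ih => rw [Function.iterate_succ_apply', Function.iterate_succ_apply', hjD, ih]

theorem map_cfun (hjD : ∀ v : E.carrier, j (E.D v) = F.mul (-2) (j v) F.vac) (n : ℤ)
    (u : E.carrier) : j (E.cfun n u) = F.mul n (j u) F.vac := by
  rw [DErtexAlgebra.cfun]
  split_ifs with hn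
  · rw [map_smul, map_iterate_D hjD, F.iterate_mul_neg_two_vac, smul_smul,
      inv_mul_cancel₀ (by exact_mod_cast Nat.factorial_ne_zero _), one_smul,
      show -((-n - 1).toNat : ℤ) - 1 = n by omega]
  · rw [map_zero, F.isVacuum.create_nonneg n (by omega)]

variable (j) in
def extLift : E.carrier × ℂ →ₗ[ℂ] F.carrier :=
  j.coprod (LinearMap.toSpanSingleton ℂ F.carrier F.vac)

theorem extLift_apply (u : E.carrier) (a : ℂ) : extLift j (u, a) = j u + a • F.vac := rfl

theorem extLift_extVac : extLift j E.extVac = F.vac := by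
  simp [DErtexAlgebra.extVac, extLift_apply]

theorem isMulHomFun_extLift (hj : IsMulHomFun E.mul F.mul j)
    (hjD : ∀ v : E.carrier, j (E.D v) = F.mul (-2) (j v) F.vac) :
    IsMulHomFun E.extMul F.mul (extLift j) := by
  rintro n ⟨u, a⟩ ⟨v, b⟩
  have h := F.isErtex
  simp only [DErtexAlgebra.extMul, extLift_apply, map_add, map_smul, apply_ite j, map_zero,
    map_cfun hjD, hj n u v, h.add_left, h.add_right, h.smul_left, h.smul_right]
  split_ifs with hn
  · subst hn
    simp only [F.isVacuum.vac_minus_one]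
    module
  · simp only [F.isVacuum.vac_ne n hn, smul_zero]
    module

theorem IsUniversalVertexHom.exists_functional (hU : IsUniversalVertexHom E F j) :
    ∃ φ : F.carrier →ₗ[ℂ] ℂ, φ F.vac = 1 ∧ ∀ u : E.carrier, φ (j u) = 0 := by
  obtain ⟨φ, ⟨⟨-, hvac⟩, hj⟩, -⟩ := hU trivialVertexAlgebra 0
    (fun n u v => show (0 : ℂ) = trivialMul n 0 0 by simp [trivialMul])
    (fun v => show (0 : ℂ) = trivialMul (-2) 0 1 by simp [trivialMul])
  exact ⟨φ, hvac, hj⟩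

theorem IsUniversalVertexHom.injective_extLift (hU : IsUniversalVertexHom E F j)
    (hjInj : Function.Injective j) : Function.Injective (extLift j) := by
  obtain ⟨φ, hφvac, hφj⟩ := hU.exists_functional
  rw [← LinearMap.ker_eq_bot, LinearMap.ker_eq_bot']
  rintro ⟨u, a⟩ h
  rw [extLift_apply] at h
  have ha : a = 0 := by simpa [hφj, hφvac] using congrArg φ h
  subst ha
  rw [zero_smul, add_zero, ← map_zero j] at h
  rw [hjInj h, Prod.mk_zero_zero]

/- The universal property, applied to `F` and to `S`, makes `S.subtype ∘ φ` and `id` two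
endomorphisms of `F` extending `j`. -/
theorem IsUniversalVertexHom.eq_top (hU : IsUniversalVertexHom E F j)
    (hj : IsMulHomFun E.mul F.mul j)
    (hjD : ∀ v : E.carrier, j (E.D v) = F.mul (-2) (j v) F.vac) (S : Submodule ℂ F.carrier)
    (hmul : ∀ (n : ℤ) (x y : F.carrier), x ∈ S → y ∈ S → F.mul n x y ∈ S)
    (hvac : F.vac ∈ S) (hjS : ∀ u, j u ∈ S) : S = ⊤ := by
  obtain ⟨φ, ⟨⟨hφmul, hφvac⟩, hφj⟩, -⟩ := hU (F.ofSubmodule S hmul hvac) (j.codRestrict S hjS)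
    (fun n u v => Subtype.ext (hj n u v)) (fun v => Subtype.ext (hjD v))
  have hid : S.subtype ∘ₗ φ = LinearMap.id := (hU F j hj hjD).unique
    ⟨⟨fun n x y => congrArg Subtype.val (hφmul n x y), congrArg Subtype.val hφvac⟩,
      fun u => congrArg Subtype.val (hφj u)⟩
    ⟨⟨fun _ _ _ => rfl, rfl⟩, fun _ => rfl⟩
  refine Submodule.eq_top_iff'.2 fun x => ?_
  rw [← LinearMap.id_apply (R := ℂ) x, ← hid]
  exact (φ x).2

theorem IsUniversalVertexHom.surjective_extLift (hU : IsUniversalVertexHom E F j)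
    (hj : IsMulHomFun E.mul F.mul j)
    (hjD : ∀ v : E.carrier, j (E.D v) = F.mul (-2) (j v) F.vac) :
    Function.Surjective (extLift j) := by
  rw [← LinearMap.range_eq_top]
  refine hU.eq_top hj hjD _ ?_ ⟨E.extVac, extLift_extVac⟩ fun u => ⟨(u, 0), by simp [extLift_apply]⟩
  rintro n _ _ ⟨x, rfl⟩ ⟨y, rfl⟩
  exact ⟨E.extMul n x y, isMulHomFun_extLift hj hjD n x y⟩

theorem eq_extLift {α : E.carrier × ℂ →ₗ[ℂ] F.carrier} (hvac : α E.extVac = F.vac)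
    (hj : ∀ u : E.carrier, α (u, 0) = j u) : α = extLift j := by
  refine LinearMap.prod_ext (LinearMap.ext fun u => ?_) (LinearMap.ext_ring ?_)
  · simp [hj, extLift_apply]
  · simpa [extLift_apply, DErtexAlgebra.extVac] using hvac

end UniversalVertexHom

/-- uniqueness up to canonical isomorphism of the vertex algebra `V = E ⊕ ℂ`:
if `F` is a vertex algebra with an injective `D`-ertex algebra homomorphism `j : E → F`
satisfying the same universal property, then there is a unique vertex algebra isomorphism
`α : V → F` with `α ∘ i = j`. -/
theorem stmt_13 (E : DErtexAlgebra) (F : VertexAlgebra)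
    (j : E.carrier →ₗ[ℂ] F.carrier) (hj : IsMulHomFun E.mul F.mul j)
    (hjD : ∀ v : E.carrier, j (E.D v) = F.mul (-2) (j v) F.vac)
    (hjInj : Function.Injective j)
    (hUniv : ∀ (W : VertexAlgebra) (ψ : E.carrier →ₗ[ℂ] W.carrier),
      IsMulHomFun E.mul W.mul ψ →
      (∀ v : E.carrier, ψ (E.D v) = W.mul (-2) (ψ v) W.vac) →
      ∃! φ : F.carrier →ₗ[ℂ] W.carrier,
        (IsMulHomFun F.mul W.mul φ ∧ φ F.vac = W.vac) ∧
          ∀ u : E.carrier, φ (j u) = ψ u) :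
    ∃! α : (E.carrier × ℂ) →ₗ[ℂ] F.carrier,
      (IsMulHomFun E.extMul F.mul α ∧ α E.extVac = F.vac ∧ Function.Bijective α) ∧
        ∀ u : E.carrier, α (u, 0) = j u := by
  have hU : IsUniversalVertexHom E F j := hUniv
  refine ⟨extLift j, ⟨⟨isMulHomFun_extLift hj hjD, extLift_extVac,
    hU.injective_extLift hjInj, hU.surjective_extLift hj hjD⟩, fun u => ?_⟩, ?_⟩
  · simp [extLift_apply]
  · rintro α ⟨⟨-, hvac, -⟩, hαj⟩
    exact eq_extLift hvac hαj

end
end
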